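/- arXiv:2603.10920 — 7 statements merged into one kernel-verified Lean document; each statement's English description precedes it below -/
import Mathlib

section
/- Let T > 0 and let u ∈ C(ℝⁿ × [0,T)) be a viscosity subsolution of the heat equation ∂_t u = Δu on ℝⁿ × (0,T) with u ≤ 0 on ℝⁿ × {0}. If there exist a, A > 0 with u(x,t) ≤ a e^{A|x|²} on ℝⁿ × [0,T), then u ≤ 0 on ℝⁿ × [0,T). -/
/-!
It suffices to propagate `u ≤ 0` from a time `s` to the strip `[s, s + h)`, with `h` depending
only on `A`, and to iterate. On the strip, the Gaussian `v(x, t) = exp (|x|² / (4 (T' - t)) + K t)`,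
`T' = s + 2h`, grows faster in `x` than `a e^{A|x|²}` and satisfies `v_t - Δv ≥ 0`; the factor
`e^{Kt}` plays the role of the prefactor `(T' - t)^{-n/2}` of the backward heat kernel. For
`δ, σ > 0`, `δ v + σ / (t₁ - t)` is then a strict classical supersolution that dominates `u` at
time `s`, for large `|x|` and near `t₁`. If `u` exceeded it somewhere, their difference would
have a positive maximum at an interior point, where the supersolution, cut off smoothly in
time, is an admissible test function: this contradicts the viscosity inequality. Letting
`δ, σ → 0` gives `u ≤ 0`.
-/

open MeasureTheory

noncomputable def lap (n : ℕ) (f : EuclideanSpace ℝ (Fin n) → ℝ)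
    (x : EuclideanSpace ℝ (Fin n)) : ℝ :=
  ∑ i : Fin n,
    fderiv ℝ (fun y => fderiv ℝ f y (EuclideanSpace.single i 1)) x (EuclideanSpace.single i 1)

open Set Filter Topology Real

local notation "ℝ^" n:max => EuclideanSpace ℝ (Fin n)

variable {n : ℕ}

noncomputable def heatOp (n : ℕ) (φ : ℝ^n → ℝ → ℝ) (x : ℝ^n) (t : ℝ) : ℝ :=
  deriv (φ x) t - lap n (fun y => φ y t) x

def IsHeatViscositySubsolution (n : ℕ) (T : ℝ) (u : ℝ^n → ℝ → ℝ) : Prop :=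
  ∀ (ψ : ℝ^n → ℝ → ℝ) (ξ : ℝ^n) (τ : ℝ), τ ∈ Ioo 0 T →
    ContDiff ℝ 2 (fun p : ℝ^n × ℝ => ψ p.1 p.2) →
    ψ ξ τ = u ξ τ → (∀ᶠ p in 𝓝 (ξ, τ), u p.1 p.2 ≤ ψ p.1 p.2) → heatOp n ψ ξ τ ≤ 0

theorem lap_add_const (f : ℝ^n → ℝ) (c : ℝ) (x : ℝ^n) :
    lap n (fun y => f y + c) x = lap n f x := by
  simp only [lap, fderiv_add_const]

theorem hasFDerivAt_mul_exp_mul_norm_sq (a c : ℝ) (y : ℝ^n) :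
    HasFDerivAt (fun y : ℝ^n => a * exp (c * ‖y‖ ^ 2))
      (a • exp (c * ‖y‖ ^ 2) • c • (2 : ℕ) • innerSL ℝ y) y :=
  (((hasStrictFDerivAt_norm_sq y).hasFDerivAt.const_mul c).exp).const_mul a

theorem fderiv_mul_exp_mul_norm_sq_single (a c : ℝ) (y : ℝ^n) (i : Fin n) :
    fderiv ℝ (fun y : ℝ^n => a * exp (c * ‖y‖ ^ 2)) y (EuclideanSpace.single i 1)
      = 2 * c * a * (exp (c * ‖y‖ ^ 2) * y i) := by
  simp only [(hasFDerivAt_mul_exp_mul_norm_sq a c y).fderiv, ContinuousLinearMap.smul_apply,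
    coe_innerSL_apply, EuclideanSpace.inner_single_right, RCLike.conj_to_real, one_mul,
    nsmul_eq_mul, Nat.cast_ofNat, smul_eq_mul]
  ring

theorem lap_mul_exp_mul_norm_sq (a c : ℝ) (x : ℝ^n) :
    lap n (fun y => a * exp (c * ‖y‖ ^ 2)) x
      = a * exp (c * ‖x‖ ^ 2) * (2 * c * n + 4 * c ^ 2 * ‖x‖ ^ 2) := by
  have hsecond (i : Fin n) :
      fderiv ℝ (fun y : ℝ^n => 2 * c * a * (exp (c * ‖y‖ ^ 2) * y i)) x
        (EuclideanSpace.single i 1) = a * exp (c * ‖x‖ ^ 2) * (2 * c + 4 * c ^ 2 * x i ^ 2) := by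
    have hexp := hasFDerivAt_mul_exp_mul_norm_sq 1 c x
    simp only [one_mul, one_smul] at hexp
    have hprod : HasFDerivAt (fun y : ℝ^n => 2 * c * a * (exp (c * ‖y‖ ^ 2) * y i)) _ x :=
      (hexp.mul (EuclideanSpace.proj i).hasFDerivAt).const_mul (2 * c * a)
    rw [hprod.fderiv]
    simp only [PiLp.proj_apply, smul_add, ContinuousLinearMap.add_apply,
      ContinuousLinearMap.smul_apply, PiLp.single_eq_same, smul_eq_mul, mul_one,
      coe_innerSL_apply, EuclideanSpace.inner_single_right, RCLike.conj_to_real, one_mul,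
      nsmul_eq_mul, Nat.cast_ofNat]
    ring
  simp only [lap, fderiv_mul_exp_mul_norm_sq_single, hsecond, ← Finset.mul_sum,
    Finset.sum_add_distrib, Finset.sum_const, Finset.card_univ, Fintype.card_fin, nsmul_eq_mul]
  rw [EuclideanSpace.norm_sq_eq]
  simp only [Real.norm_eq_abs, sq_abs]
  ring

theorem exists_contDiff_eventuallyEq_id_mapsTo_Ioo {l h τ : ℝ} (hτ : τ ∈ Ioo l h) :
    ∃ χ : ℝ → ℝ, ContDiff ℝ 2 χ ∧ χ =ᶠ[𝓝 τ] id ∧ ∀ t, χ t ∈ Ioo l h := by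
  set r := min (τ - l) (h - τ)
  have hr : 0 < r := lt_min (sub_pos.2 hτ.1) (sub_pos.2 hτ.2)
  let bump : ContDiffBump τ := ⟨r / 2, r, half_pos hr, half_lt_self hr⟩
  refine ⟨fun t => τ + (t - τ) * bump t, ?_, ?_, fun t => ?_⟩
  · exact contDiff_const.add ((contDiff_id.sub contDiff_const).mul bump.contDiff)
  · filter_upwards [Metric.closedBall_mem_nhds τ (half_pos hr)] with t ht
    simp [bump.one_of_mem_closedBall ht]
  · have hclose : |(t - τ) * bump t| < r := by
      rw [abs_mul, abs_of_nonneg bump.nonneg]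
      by_cases ht : t ∈ Metric.ball τ r
      · calc |t - τ| * bump t ≤ |t - τ| * 1 := by gcongr; exact bump.le_one
          _ < r := by simpa [Real.dist_eq] using ht
      · rw [← bump.support_eq, Function.notMem_support] at ht
        simp [ht, hr]
    obtain ⟨hlow, hhigh⟩ := abs_lt.1 hclose
    constructor <;> linarith [min_le_left (τ - l) (h - τ), min_le_right (τ - l) (h - τ)]

theorem IsHeatViscositySubsolution.heatOp_nonpos {T : ℝ} {u φ : ℝ^n → ℝ → ℝ}
    (hu : IsHeatViscositySubsolution n T u) {l h : ℝ}
    (hφ : ContDiffOn ℝ 2 (fun p : ℝ^n × ℝ => φ p.1 p.2) (univ ×ˢ Ioo l h))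
    {ξ : ℝ^n} {τ : ℝ} (hτ : τ ∈ Ioo l h) (hτT : τ ∈ Ioo 0 T)
    (hmax : IsLocalMax (fun p : ℝ^n × ℝ => u p.1 p.2 - φ p.1 p.2) (ξ, τ)) :
    heatOp n φ ξ τ ≤ 0 := by
  -- reparametrizing time by `χ` makes `φ` a globally `C²` test function, unchanged near `τ`
  obtain ⟨χ, hχ, hχτ, hχmaps⟩ := exists_contDiff_eventuallyEq_id_mapsTo_Ioo hτ
  set c := u ξ τ - φ ξ τ
  have hχτ' : χ τ = τ := hχτ.eq_of_nhds
  have hnear : ∀ᶠ p : ℝ^n × ℝ in 𝓝 (ξ, τ), χ p.2 = p.2 :=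
    (continuous_snd.tendsto (ξ, τ)).eventually hχτ
  have hψ : ContDiff ℝ 2 (fun p : ℝ^n × ℝ => φ p.1 (χ p.2) + c) :=
    (hφ.comp_contDiff (contDiff_fst.prodMk (hχ.comp contDiff_snd))
      fun p => ⟨mem_univ _, hχmaps p.2⟩).add contDiff_const
  have htouch := hu (fun x t => φ x (χ t) + c) ξ τ hτT hψ (by simp [hχτ', c])
    (by filter_upwards [hmax, hnear] with p hp hpχ; simp only [hpχ]; linarith)
  have hderiv : deriv (fun t => φ ξ (χ t) + c) τ = deriv (φ ξ) τ := by
    have hloc : (fun t => φ ξ (χ t) + c) =ᶠ[𝓝 τ] fun t => φ ξ t + c := by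
      filter_upwards [hχτ] with t ht
      simp only [ht, id]
    rw [hloc.deriv_eq, deriv_add_const]
  simpa only [heatOp, hχτ', lap_add_const, hderiv] using htouch

theorem exists_pos_isMaxOn_of_nonpos_off {X : Type*} [TopologicalSpace X] {f : X → ℝ}
    {S K : Set X} (hK : IsCompact K) (hf : ContinuousOn f K)
    (hoff : ∀ p ∈ S, p ∉ K → f p ≤ 0) {p₀ : X} (hp₀ : p₀ ∈ S) (hpos : 0 < f p₀) :
    ∃ p ∈ K, 0 < f p ∧ IsMaxOn f S p := by
  have hp₀K : p₀ ∈ K := by_contra fun h => (hoff p₀ hp₀ h).not_gt hpos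
  obtain ⟨p, hpK, hmax⟩ := hK.exists_isMaxOn ⟨p₀, hp₀K⟩ hf
  have hfp : 0 < f p := hpos.trans_le (hmax hp₀K)
  refine ⟨p, hpK, hfp, fun q hq => ?_⟩
  by_cases hqK : q ∈ K
  · exact hmax hqK
  · exact (hoff q hq hqK).trans hfp.le

theorem IsHeatViscositySubsolution.le_of_heatOp_pos {T s t₁ R t₂ : ℝ} {u φ : ℝ^n → ℝ → ℝ}
    (hsub : IsHeatViscositySubsolution n T u)
    (hu : ContinuousOn (fun p : ℝ^n × ℝ => u p.1 p.2) (univ ×ˢ Ico 0 T))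
    (hs : 0 ≤ s) (ht₁ : t₁ ≤ T)
    (hφ : ContDiffOn ℝ 2 (fun p : ℝ^n × ℝ => φ p.1 p.2) (univ ×ˢ Iio t₁))
    (hheat : ∀ x, ∀ t ∈ Ioo s t₁, 0 < heatOp n φ x t)
    (hinit : ∀ x, u x s ≤ φ x s) (ht₂ : t₂ < t₁)
    (hfar : ∀ x, ∀ t ∈ Ico s t₁, R < ‖x‖ ∨ t₂ < t → u x t ≤ φ x t) :
    ∀ x, ∀ t ∈ Ico s t₁, u x t ≤ φ x t := by
  intro x₀ t₀ ht₀
  by_contra! hlt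
  set w := fun p : ℝ^n × ℝ => u p.1 p.2 - φ p.1 p.2
  set K := Metric.closedBall (0 : ℝ^n) R ×ˢ Icc s t₂
  have hKS : K ⊆ univ ×ˢ Ico s t₁ := prod_mono (subset_univ _) (Icc_subset_Ico_right ht₂)
  have hw : ContinuousOn w K :=
    (hu.mono (hKS.trans (prod_mono subset_rfl (Ico_subset_Ico hs ht₁)))).sub
      (hφ.continuousOn.mono (hKS.trans (prod_mono subset_rfl Ico_subset_Iio_self)))
  have hoff : ∀ p ∈ univ ×ˢ Ico s t₁, p ∉ K → w p ≤ 0 := by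
    rintro ⟨x, t⟩ ⟨-, ht⟩ hpK
    refine sub_nonpos.2 (hfar x t ht ?_)
    by_contra! hnear
    exact hpK ⟨by simpa using hnear.1, ht.1, hnear.2⟩
  obtain ⟨⟨ξ, τ⟩, hK, hpos, hmax⟩ := exists_pos_isMaxOn_of_nonpos_off
    ((isCompact_closedBall _ _).prod isCompact_Icc) hw hoff
    (p₀ := (x₀, t₀)) ⟨mem_univ _, ht₀⟩ (sub_pos.2 hlt)
  have hτt₁ : τ < t₁ := (hKS hK).2.2
  have hsτ : s < τ := by
    refine lt_of_le_of_ne hK.2.1 fun hsτ => ?_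
    have := sub_nonpos.2 (hinit ξ)
    simp only [w, ← hsτ] at hpos
    linarith
  have hlocal : IsLocalMax w (ξ, τ) :=
    hmax.isLocalMax (prod_mem_nhds univ_mem (Ico_mem_nhds hsτ hτt₁))
  have := hsub.heatOp_nonpos (hφ.mono (prod_mono subset_rfl Ioo_subset_Iio_self))
    ⟨hsτ, hτt₁⟩ ⟨hs.trans_lt hsτ, hτt₁.trans_le ht₁⟩ hlocal
  linarith [hheat ξ τ ⟨hsτ, hτt₁⟩]

noncomputable def gaussianBarrier (T' K : ℝ) (x : ℝ^n) (t : ℝ) : ℝ :=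
  exp (‖x‖ ^ 2 / (4 * (T' - t)) + K * t)

theorem gaussianBarrier_pos (T' K : ℝ) (x : ℝ^n) (t : ℝ) : 0 < gaussianBarrier T' K x t :=
  exp_pos _

theorem exp_le_gaussianBarrier {B T' K t : ℝ} (x : ℝ^n) (ht : t < T')
    (hB : 4 * B * (T' - t) ≤ 1) (hKt : 0 ≤ K * t) :
    exp (B * ‖x‖ ^ 2) ≤ gaussianBarrier T' K x t := by
  have hrate : B ≤ 1 / (4 * (T' - t)) := by
    rw [le_div_iff₀ (by linarith)]
    linarith
  unfold gaussianBarrier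
  gcongr
  rw [div_eq_mul_one_div _ (4 * (T' - t)), mul_comm]
  linarith [mul_le_mul_of_nonneg_right hrate (sq_nonneg ‖x‖)]

theorem contDiffOn_gaussianBarrier_add (δ σ T' K : ℝ) {t₁ : ℝ} (ht₁ : t₁ ≤ T') :
    ContDiffOn ℝ 2 (fun p : ℝ^n × ℝ => δ * gaussianBarrier T' K p.1 p.2 + σ / (t₁ - p.2))
      (univ ×ˢ Iio t₁) := by
  rintro ⟨x, t⟩ ⟨-, ht : t < t₁⟩
  have hT' : 4 * (T' - t) ≠ 0 := by linarith
  have ht₁ : t₁ - t ≠ 0 := by linarith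
  have hnorm : ContDiff ℝ 2 (fun p : ℝ^n × ℝ => ‖p.1‖ ^ 2) :=
    (contDiff_norm_sq ℝ).comp contDiff_fst
  unfold gaussianBarrier
  apply ContDiffAt.contDiffWithinAt
  fun_prop (disch := assumption)

theorem heatOp_gaussianBarrier_add (δ σ T' K t₁ : ℝ) (ξ : ℝ^n) {τ : ℝ} (hτT' : τ < T')
    (hτt₁ : τ < t₁) :
    heatOp n (fun x t => δ * gaussianBarrier T' K x t + σ / (t₁ - t)) ξ τ
      = δ * gaussianBarrier T' K ξ τ * (K - n / (2 * (T' - τ))) + σ / (t₁ - τ) ^ 2 := by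
  have hT' : T' - τ ≠ 0 := by linarith
  have ht₁ : t₁ - τ ≠ 0 := by linarith
  have hspace : (fun y : ℝ^n => δ * gaussianBarrier T' K y τ + σ / (t₁ - τ))
      = fun y => δ * exp (K * τ) * exp ((4 * (T' - τ))⁻¹ * ‖y‖ ^ 2) + σ / (t₁ - τ) := by
    funext y
    rw [gaussianBarrier, exp_add]
    ring_nf
  have htime : HasDerivAt (fun t => δ * gaussianBarrier T' K ξ t + σ / (t₁ - t))
      (δ * (gaussianBarrier T' K ξ τ * ((0 * (4 * (T' - τ)) - ‖ξ‖ ^ 2 * (4 * (0 - 1)))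
        / (4 * (T' - τ)) ^ 2 + K * 1)) + (0 * (t₁ - τ) - σ * (0 - 1)) / (t₁ - τ) ^ 2) τ :=
    ((((hasDerivAt_const τ _).div (((hasDerivAt_const τ T').sub (hasDerivAt_id τ)).const_mul 4)
      (mul_ne_zero four_ne_zero hT')).add ((hasDerivAt_id τ).const_mul K)).exp.const_mul δ).add
      ((hasDerivAt_const τ σ).div ((hasDerivAt_const τ t₁).sub (hasDerivAt_id τ)) ht₁)
  rw [heatOp, htime.deriv, hspace, lap_add_const, lap_mul_exp_mul_norm_sq, gaussianBarrier,
    exp_add]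
  field_simp
  ring

theorem heatOp_gaussianBarrier_add_pos {δ σ T' K t₁ τ : ℝ} (ξ : ℝ^n) (hδ : 0 ≤ δ) (hσ : 0 < σ)
    (hτT' : τ < T') (hτt₁ : τ < t₁) (hK : n / (2 * (T' - τ)) ≤ K) :
    0 < heatOp n (fun x t => δ * gaussianBarrier T' K x t + σ / (t₁ - t)) ξ τ := by
  rw [heatOp_gaussianBarrier_add δ σ T' K t₁ ξ hτT' hτt₁]
  have := gaussianBarrier_pos T' K ξ τ
  have := sub_nonneg.2 hK
  have := sub_pos.2 hτt₁
  positivity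

theorem eventually_mul_exp_mul_sq_le {A B : ℝ} (a : ℝ) {δ : ℝ} (hδ : 0 < δ) (hAB : A < B) :
    ∀ᶠ r in atTop, a * exp (A * r ^ 2) ≤ δ * exp (B * r ^ 2) := by
  have hlarge : Tendsto (fun r : ℝ => exp ((B - A) * r ^ 2)) atTop atTop :=
    tendsto_exp_atTop.comp ((tendsto_pow_atTop two_ne_zero).const_mul_atTop (sub_pos.2 hAB))
  filter_upwards [hlarge.eventually_ge_atTop (a / δ)] with r hr
  have hsplit : exp (B * r ^ 2) = exp ((B - A) * r ^ 2) * exp (A * r ^ 2) := by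
    rw [← exp_add]; ring_nf
  rw [hsplit, ← mul_assoc]
  gcongr
  rwa [div_le_iff₀' hδ] at hr

/- With `T' = s + 2h` and `K = n / (2h)`, on `[s, s + h)` we have `h < T' - t ≤ 2h`: the spatial
rate `1 / (4 (T' - t)) ≥ 1 / (8h)` beats `A`, and `K ≥ n / (2 (T' - t))`. -/
theorem IsHeatViscositySubsolution.le_gaussianBarrier_add {T a A s h t₁ δ σ : ℝ}
    {u : ℝ^n → ℝ → ℝ} (hsub : IsHeatViscositySubsolution n T u)
    (hu : ContinuousOn (fun p : ℝ^n × ℝ => u p.1 p.2) (univ ×ˢ Ico 0 T)) (ha : 0 < a)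
    (hA : 0 ≤ A)
    (hgrowth : ∀ x, ∀ t ∈ Ico 0 T, u x t ≤ a * exp (A * ‖x‖ ^ 2)) (hAh : 8 * A * h < 1)
    (hs : 0 ≤ s) (hus : ∀ x, u x s ≤ 0) (hst₁ : s < t₁) (ht₁T : t₁ ≤ T) (ht₁h : t₁ ≤ s + h)
    (hδ : 0 < δ) (hσ : 0 < σ) :
    ∀ x, ∀ t ∈ Ico s t₁,
      u x t ≤ δ * gaussianBarrier (s + 2 * h) (n / (2 * h)) x t + σ / (t₁ - t) := by
  have hh : 0 < h := by linarith
  obtain ⟨R, hR⟩ := eventually_atTop.1 (eventually_mul_exp_mul_sq_le a hδ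
    ((lt_div_iff₀ (by positivity : (0 : ℝ) < 8 * h)).2 (by linarith) : A < 1 / (8 * h)))
  set C := a * exp (A * R ^ 2)
  have hC : 0 < C := by positivity
  refine hsub.le_of_heatOp_pos (R := R) (t₂ := t₁ - σ / C) hu hs ht₁T
    (contDiffOn_gaussianBarrier_add δ σ _ _ (by linarith)) ?_ (fun x => ?_)
    (sub_lt_self _ (div_pos hσ hC)) ?_
  · rintro x t ⟨-, htt₁⟩
    refine heatOp_gaussianBarrier_add_pos x hδ.le hσ (by linarith) htt₁ ?_
    gcongr
    linarith
  · linarith [hus x, mul_pos hδ (gaussianBarrier_pos (s + 2 * h) (n / (2 * h)) x s),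
      div_pos hσ (sub_pos.2 hst₁)]
  rintro x t ⟨hst, htt₁⟩ hfar
  have hux := hgrowth x t ⟨hs.trans hst, htt₁.trans_le ht₁T⟩
  have hδg := mul_pos hδ (gaussianBarrier_pos (s + 2 * h) (n / (2 * h)) x t)
  by_cases hxR : R < ‖x‖
  · have hexp : exp (1 / (8 * h) * ‖x‖ ^ 2) ≤ gaussianBarrier (s + 2 * h) (n / (2 * h)) x t :=
      exp_le_gaussianBarrier x (by linarith) (by field_simp; linarith)
        (by have := hs.trans hst; positivity)
    calc u x t ≤ δ * exp (1 / (8 * h) * ‖x‖ ^ 2) := hux.trans (hR ‖x‖ hxR.le)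
      _ ≤ δ * gaussianBarrier (s + 2 * h) (n / (2 * h)) x t := by gcongr
      _ ≤ _ := by linarith [div_pos hσ (sub_pos.2 htt₁)]
  · have ht₂ : t₁ - t < σ / C := by linarith [hfar.resolve_left hxR]
    have huC : a * exp (A * ‖x‖ ^ 2) ≤ a * exp (A * R ^ 2) := by
      gcongr
      exact not_lt.1 hxR
    have hCσ : C ≤ σ / (t₁ - t) := by
      rw [le_div_iff₀ (sub_pos.2 htt₁)]
      rw [lt_div_iff₀ hC] at ht₂
      linarith
    linarith

theorem IsHeatViscositySubsolution.nonpos_of_nonpos_at {T a A s h : ℝ} {u : ℝ^n → ℝ → ℝ}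
    (hsub : IsHeatViscositySubsolution n T u)
    (hu : ContinuousOn (fun p : ℝ^n × ℝ => u p.1 p.2) (univ ×ˢ Ico 0 T)) (ha : 0 < a)
    (hA : 0 ≤ A)
    (hgrowth : ∀ x, ∀ t ∈ Ico 0 T, u x t ≤ a * exp (A * ‖x‖ ^ 2)) (hAh : 8 * A * h < 1)
    (hs : 0 ≤ s) (hus : ∀ x, u x s ≤ 0) :
    ∀ t ∈ Ico s T, t < s + h → ∀ x, u x t ≤ 0 := by
  intro t₀ ⟨hst₀, ht₀T⟩ ht₀h x₀
  set t₁ := min (s + h) T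
  have ht₀t₁ : t₀ < t₁ := lt_min ht₀h ht₀T
  set V := gaussianBarrier (s + 2 * h) (n / (2 * h)) x₀ t₀ + 1 / (t₁ - t₀)
  have hV : 0 < V := add_pos (gaussianBarrier_pos _ _ _ _) (one_div_pos.2 (sub_pos.2 ht₀t₁))
  refine le_of_forall_pos_le_add fun ε hε => ?_
  calc u x₀ t₀
      ≤ ε / V * gaussianBarrier (s + 2 * h) (n / (2 * h)) x₀ t₀ + ε / V / (t₁ - t₀) :=
        hsub.le_gaussianBarrier_add hu ha hA hgrowth hAh hs hus (hst₀.trans_lt ht₀t₁)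
          (min_le_right _ _) (min_le_left _ _) (div_pos hε hV) (div_pos hε hV) x₀ t₀
          ⟨hst₀, ht₀t₁⟩
    _ = 0 + ε := by field_simp; ring

theorem forall_mem_Ico_of_step {T h : ℝ} (hh : 0 < h) {P : ℝ → Prop} (h0 : P 0)
    (hstep : ∀ s ∈ Ico 0 T, P s → ∀ t ∈ Ico s T, t < s + h → P t) :
    ∀ t ∈ Ico 0 T, P t := by
  have hk (k : ℕ) : ∀ t ∈ Ico 0 T, t ≤ k * (h / 2) → P t := by
    induction k with
    | zero =>
      intro t ht htk
      rwa [le_antisymm (by simpa using htk) ht.1]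
    | succ k ih =>
      intro t ht htk
      by_cases hkt : t ≤ k * (h / 2)
      · exact ih t ht hkt
      have hkT : k * (h / 2) ∈ Ico 0 T := ⟨by positivity, (not_le.1 hkt).trans ht.2⟩
      refine hstep _ hkT (ih _ hkT le_rfl) t ⟨(not_le.1 hkt).le, ht.2⟩ ?_
      push_cast at htk
      linarith
  intro t ht
  obtain ⟨k, hk'⟩ := exists_nat_ge (t / (h / 2))
  exact hk k t ht ((div_le_iff₀ (half_pos hh)).1 hk')

theorem stmt_7_general (n : ℕ) (T : ℝ)
    (u : EuclideanSpace ℝ (Fin n) → ℝ → ℝ)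
    (hu : ContinuousOn (fun p : EuclideanSpace ℝ (Fin n) × ℝ => u p.1 p.2)
      (Set.univ ×ˢ Set.Ico 0 T))
    (hsub : ∀ (ψ : EuclideanSpace ℝ (Fin n) → ℝ → ℝ) (ξ : EuclideanSpace ℝ (Fin n)) (τ : ℝ),
      τ ∈ Set.Ioo 0 T →
      ContDiff ℝ 2 (fun p : EuclideanSpace ℝ (Fin n) × ℝ => ψ p.1 p.2) →
      ψ ξ τ = u ξ τ → (∀ᶠ p in nhds (ξ, τ), u p.1 p.2 ≤ ψ p.1 p.2) →
      deriv (ψ ξ) τ - lap n (fun y => ψ y τ) ξ ≤ 0)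
    (h0 : ∀ x, u x 0 ≤ 0)
    (a A : ℝ) (ha : 0 < a) (hA : 0 < A)
    (hgrowth : ∀ x, ∀ t ∈ Set.Ico 0 T, u x t ≤ a * Real.exp (A * ‖x‖ ^ 2)) :
    ∀ x, ∀ t ∈ Set.Ico 0 T, u x t ≤ 0 := by
  have hsub' : IsHeatViscositySubsolution n T u := hsub
  have hAh : 8 * A * (16 * A)⁻¹ < 1 := by
    rw [show 8 * A * (16 * A)⁻¹ = 1 / 2 by field_simp; norm_num]
    norm_num
  intro x t ht
  exact forall_mem_Ico_of_step (by positivity) (P := fun t => ∀ x, u x t ≤ 0) h0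
    (fun s hs hus => hsub'.nonpos_of_nonpos_at hu ha hA.le hgrowth hAh hs.1 hus) t ht x

/-- Lemma 2.3 (comparison principle): let `T > 0` and `u ∈ C(ℝⁿ × [0,T))` be a viscosity
subsolution of the heat equation on `ℝⁿ × (0,T)` with `u ≤ 0` at `t = 0` and
`u(x,t) ≤ a e^{A|x|²}`. Then `u ≤ 0` on `ℝⁿ × [0,T)`. -/
theorem stmt_7 (n : ℕ) (T : ℝ) (hT : 0 < T)
    (u : EuclideanSpace ℝ (Fin n) → ℝ → ℝ)
    (hu : ContinuousOn (fun p : EuclideanSpace ℝ (Fin n) × ℝ => u p.1 p.2)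
      (Set.univ ×ˢ Set.Ico 0 T))
    (hsub : ∀ (ψ : EuclideanSpace ℝ (Fin n) → ℝ → ℝ) (ξ : EuclideanSpace ℝ (Fin n)) (τ : ℝ),
      τ ∈ Set.Ioo 0 T →
      ContDiff ℝ 2 (fun p : EuclideanSpace ℝ (Fin n) × ℝ => ψ p.1 p.2) →
      ψ ξ τ = u ξ τ → (∀ᶠ p in nhds (ξ, τ), u p.1 p.2 ≤ ψ p.1 p.2) →
      deriv (ψ ξ) τ - lap n (fun y => ψ y τ) ξ ≤ 0)
    (h0 : ∀ x, u x 0 ≤ 0)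
    (a A : ℝ) (ha : 0 < a) (hA : 0 < A)
    (hgrowth : ∀ x, ∀ t ∈ Set.Ico 0 T, u x t ≤ a * Real.exp (A * ‖x‖ ^ 2)) :
    ∀ x, ∀ t ∈ Set.Ico 0 T, u x t ≤ 0 :=
  stmt_7_general n T u hu hsub h0 a A ha hA hgrowth
end

section
/- Let H = H(x,t,v,θ,A) be continuous and degenerate elliptic, and for fixed (t,θ) let (x,v,A) ↦ H(x,t,v,θ,A) be convex. Let u be a classical solution of ∂_t u = H(x,t,u,∇u,∇²u) on ℝⁿ × (0,T) with u(x,t) → ∞ as |x| → ∞ for each t ∈ (0,T). For λ ∈ (0,1), define U_λ(x,t) = inf{(1-λ)u(x₀,t) + λu(x₁,t) : x = (1-λ)x₀ + λx₁}. Then U_λ is a viscosity supersolution of the same equation. -/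
/-- The Laplacian-type second derivative data: the Hessian matrix of `f : ℝⁿ → ℝ` at `x`. -/
noncomputable def hess (n : ℕ) (f : EuclideanSpace ℝ (Fin n) → ℝ)
    (x : EuclideanSpace ℝ (Fin n)) : Matrix (Fin n) (Fin n) ℝ :=
  Matrix.of fun i j =>
    fderiv ℝ (fun y => fderiv ℝ f y (EuclideanSpace.single j 1)) x (EuclideanSpace.single i 1)

/-!
Let `ψ` touch `U_λ` from below at `(ξ, τ)`. Coercivity makes the infimum defining `U_λ(ξ, τ)` a
minimum, attained at some `ξ = (1-λ) a + λ b`. Since `ψ ≤ U_λ ≤ (1-λ) u(x₀, t) + λ u(x₁, t)` near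
the contact, `(x₀, x₁, t) ↦ (1-λ) u(x₀, t) + λ u(x₁, t) - ψ((1-λ) x₀ + λ x₁, t)` has a local minimum
(of value `0`) at `(a, b, τ)`. The first-order conditions give `∂ₜψ = (1-λ) ∂ₜu(a) + λ ∂ₜu(b)` and
`∇u(a) = ∇u(b) = ∇ψ(ξ)`; the second-order condition in the directions `(v, v)` gives
`∇²ψ(ξ) ≤ (1-λ) ∇²u(a) + λ ∇²u(b)`. Ellipticity, then convexity of `H` in `(x, v, A)`, then the
equation at `a` and `b` turn this into `H(ξ, τ, ψ, ∇ψ, ∇²ψ) ≤ ∂ₜψ`.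
-/

open Filter Topology Set

theorem IsLocalMin.deriv_deriv_nonneg {f : ℝ → ℝ} {x₀ : ℝ} (h : IsLocalMin f x₀)
    (hc : ContinuousAt f x₀) : 0 ≤ deriv (deriv f) x₀ := by
  by_contra! hneg
  -- the second-derivative test would make `x₀` a local maximum too, so `f` is locally constant
  have hmax := isLocalMax_of_deriv_deriv_neg hneg h.deriv_eq_zero hc
  have hconst : f =ᶠ[𝓝 x₀] fun _ => f x₀ := by
    filter_upwards [h, hmax] with x hmin hmax using le_antisymm hmax hmin
  have hderiv : deriv f =ᶠ[𝓝 x₀] fun _ => 0 := by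
    filter_upwards [hconst.eventuallyEq_nhds] with x hx
    rw [hx.deriv_eq, deriv_const]
  rw [hderiv.deriv_eq, deriv_const] at hneg
  exact hneg.false

theorem IsLocalMin.nonneg_of_hasDerivAt {φ d : ℝ → ℝ} {x₀ c : ℝ} (h : IsLocalMin φ x₀)
    (hφ : ∀ s, HasDerivAt φ (d s) s) (hd : HasDerivAt d c x₀) : 0 ≤ c := by
  have hφd : deriv φ = d := funext fun s => (hφ s).deriv
  simpa [hφd, hd.deriv] using h.deriv_deriv_nonneg (hφ x₀).continuousAt

theorem deriv_eq_of_isLocalMin_sub {f₀ f₁ φ : ℝ → ℝ} {τ lam : ℝ}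
    (h₀ : DifferentiableAt ℝ f₀ τ) (h₁ : DifferentiableAt ℝ f₁ τ) (hφ : DifferentiableAt ℝ φ τ)
    (hmin : IsLocalMin (fun t => (1 - lam) * f₀ t + lam * f₁ t - φ t) τ) :
    (1 - lam) * deriv f₀ τ + lam * deriv f₁ τ = deriv φ τ := by
  have := hmin.hasDerivAt_eq_zero
    (((h₀.hasDerivAt.const_mul _).add (h₁.hasDerivAt.const_mul _)).sub hφ.hasDerivAt)
  linarith

section Line

variable {E F : Type*} [NormedAddCommGroup E] [NormedSpace ℝ E]
  [NormedAddCommGroup F] [NormedSpace ℝ F]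

theorem hasDerivAt_comp_add_smul {g : E → F} {a v : E} {s : ℝ}
    (hg : DifferentiableAt ℝ g (a + s • v)) :
    HasDerivAt (fun s : ℝ => g (a + s • v)) (fderiv ℝ g (a + s • v) v) s := by
  have hline : HasDerivAt (fun s : ℝ => a + s • v) v s := by
    simpa using ((hasDerivAt_id s).smul_const v).const_add a
  exact hg.hasFDerivAt.comp_hasDerivAt s hline

theorem hasDerivAt_fderiv_comp_add_smul {g : E → F} (hg : ContDiff ℝ 2 g) (a v w : E) (s : ℝ) :
    HasDerivAt (fun s : ℝ => fderiv ℝ g (a + s • v) w)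
      (fderiv ℝ (fderiv ℝ g) (a + s • v) v w) s := by
  have hdg : Differentiable ℝ (fderiv ℝ g) :=
    (hg.fderiv_right (m := 1) le_rfl).differentiable one_ne_zero
  exact (ContinuousLinearMap.apply ℝ F w).hasFDerivAt.comp_hasDerivAt s
    (hasDerivAt_comp_add_smul (hdg _))

end Line

theorem Continuous.bddBelow_range_of_tendsto_cocompact {X : Type*} [TopologicalSpace X]
    [Nonempty X] {g : X → ℝ} (hg : Continuous g) (hcoer : Tendsto g (cocompact X) atTop) :
    BddBelow (range g) := by
  obtain ⟨c, hc⟩ := hg.exists_forall_le hcoer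
  exact ⟨g c, forall_mem_range.2 hc⟩

section InfConv

variable {E : Type*} [NormedAddCommGroup E] [NormedSpace ℝ E]

-- `sInf` of a set of reals that is unbounded below is `0`, hence the hypotheses of `infConv_le`.
noncomputable def infConv (lam : ℝ) (g : E → ℝ) (x : E) : ℝ :=
  sInf {s : ℝ | ∃ x₀ x₁ : E, x = (1 - lam) • x₀ + lam • x₁ ∧ s = (1 - lam) * g x₀ + lam * g x₁}

theorem infConv_le {lam : ℝ} {g : E → ℝ} (hg : BddBelow (range g)) (h0 : 0 ≤ lam)
    (h1 : lam ≤ 1) (x₀ x₁ : E) :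
    infConv lam g ((1 - lam) • x₀ + lam • x₁) ≤ (1 - lam) * g x₀ + lam * g x₁ := by
  obtain ⟨c, hc⟩ := hg
  refine csInf_le ⟨c, ?_⟩ ⟨x₀, x₁, rfl, rfl⟩
  rintro _ ⟨y₀, y₁, -, rfl⟩
  have h₀ := hc (mem_range_self y₀)
  have h₁ := hc (mem_range_self y₁)
  nlinarith [mul_nonneg (sub_nonneg.2 h1) (sub_nonneg.2 h₀), mul_nonneg h0 (sub_nonneg.2 h₁)]

theorem exists_infConv_eq [ProperSpace E] {lam : ℝ} {g : E → ℝ} (hg : Continuous g)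
    (hcoer : Tendsto g (cocompact E) atTop) (h0 : 0 < lam) (h1 : lam < 1) (x : E) :
    ∃ x₀ x₁, x = (1 - lam) • x₀ + lam • x₁ ∧
      infConv lam g x = (1 - lam) * g x₀ + lam * g x₁ := by
  set partner : E → E := fun y => lam⁻¹ • (x - (1 - lam) • y)
  have hpartner : ∀ y, x = (1 - lam) • y + lam • partner y := fun y => by
    simp [partner, smul_smul, mul_inv_cancel₀ h0.ne']
  have hpartner_unique : ∀ y₀ y₁, x = (1 - lam) • y₀ + lam • y₁ → y₁ = partner y₀ := by
    rintro y₀ y₁ rfl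
    simp [partner, smul_smul, inv_mul_cancel₀ h0.ne']
  obtain ⟨c, hc⟩ := hg.exists_forall_le hcoer
  have hcoer' : Tendsto (fun y => (1 - lam) * g y + lam * g (partner y)) (cocompact E) atTop :=
    tendsto_atTop_add_right_of_le _ (lam * g c) (hcoer.const_mul_atTop (sub_pos.2 h1))
      fun y => by gcongr; exact hc _
  have hcont : Continuous fun y => (1 - lam) * g y + lam * g (partner y) := by fun_prop
  obtain ⟨a, ha⟩ := hcont.exists_forall_le hcoer'
  refine ⟨a, partner a, hpartner a, IsLeast.csInf_eq ⟨⟨a, partner a, hpartner a, rfl⟩, ?_⟩⟩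
  rintro _ ⟨y₀, y₁, hy, rfl⟩
  rw [hpartner_unique y₀ y₁ hy]
  exact ha y₀

end InfConv

section Contact

variable {E : Type*} [NormedAddCommGroup E] [NormedSpace ℝ E]

def combGap (lam : ℝ) (g p : E → ℝ) (q : E × E) : ℝ :=
  (1 - lam) * g q.1 + lam * g q.2 - p ((1 - lam) • q.1 + lam • q.2)

theorem isLocalMin_combGap {u ψ : E → ℝ → ℝ} {a b : E} {τ lam : ℝ} (h0 : 0 ≤ lam)
    (h1 : lam ≤ 1) (hbdd : ∀ᶠ t in 𝓝 τ, BddBelow (range (u · t)))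
    (hle : ∀ᶠ p in 𝓝 ((1 - lam) • a + lam • b, τ), ψ p.1 p.2 ≤ infConv lam (u · p.2) p.1)
    (hcontact : ψ ((1 - lam) • a + lam • b) τ = (1 - lam) * u a τ + lam * u b τ) :
    IsLocalMin (fun r : (E × E) × ℝ => combGap lam (u · r.2) (ψ · r.2) r.1) ((a, b), τ) := by
  have hcont : Continuous fun r : (E × E) × ℝ => ((1 - lam) • r.1.1 + lam • r.1.2, r.2) := by
    fun_prop
  filter_upwards [(hcont.tendsto ((a, b), τ)).eventually hle,
    (continuous_snd.tendsto ((a, b), τ)).eventually hbdd] with r hr hbr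
  have := infConv_le hbr h0 h1 r.1.1 r.1.2
  simp only [combGap, hcontact]
  linarith

theorem fderiv_eq_of_isLocalMin_combGap {g p : E → ℝ} {a b : E} {lam : ℝ} (h0 : lam ≠ 0)
    (h1 : lam ≠ 1) (hga : DifferentiableAt ℝ g a) (hgb : DifferentiableAt ℝ g b)
    (hp : DifferentiableAt ℝ p ((1 - lam) • a + lam • b))
    (hmin : IsLocalMin (combGap lam g p) (a, b)) :
    fderiv ℝ g a = fderiv ℝ p ((1 - lam) • a + lam • b) ∧
      fderiv ℝ g b = fderiv ℝ p ((1 - lam) • a + lam • b) := by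
  set ξ := (1 - lam) • a + lam • b
  have hlin : HasFDerivAt (fun q : E × E => (1 - lam) • q.1 + lam • q.2)
      ((1 - lam) • ContinuousLinearMap.fst ℝ E E + lam • ContinuousLinearMap.snd ℝ E E) (a, b) :=
    ((1 - lam) • ContinuousLinearMap.fst ℝ E E + lam • ContinuousLinearMap.snd ℝ E E).hasFDerivAt
  have hderiv : HasFDerivAt (combGap lam g p)
      ((1 - lam) • (fderiv ℝ g a).comp (.fst ℝ E E) + lam • (fderiv ℝ g b).comp (.snd ℝ E E)
        - (fderiv ℝ p ξ).comp ((1 - lam) • .fst ℝ E E + lam • .snd ℝ E E)) (a, b) :=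
    (((hga.hasFDerivAt.comp _ hasFDerivAt_fst).const_mul _).add
      ((hgb.hasFDerivAt.comp _ hasFDerivAt_snd).const_mul _)).sub
      (hp.hasFDerivAt.comp (a, b) hlin)
  have hzero := hmin.hasFDerivAt_eq_zero hderiv
  have happly : ∀ h₀ h₁ : E, (1 - lam) * (fderiv ℝ g a h₀ - fderiv ℝ p ξ h₀)
      + lam * (fderiv ℝ g b h₁ - fderiv ℝ p ξ h₁) = 0 := fun h₀ h₁ => by
    have := DFunLike.congr_fun hzero (h₀, h₁)
    simp only [ContinuousLinearMap.comp_add, ContinuousLinearMap.comp_smulₛₗ, Real.ringHom_apply,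
      sub_apply, add_apply, smul_apply, ContinuousLinearMap.comp_apply, smul_eq_mul,
      ContinuousLinearMap.coe_fst', ContinuousLinearMap.coe_snd', zero_apply] at this
    linarith
  constructor <;> ext h
  · simpa [sub_eq_zero, sub_ne_zero.2 h1.symm] using happly h 0
  · simpa [sub_eq_zero, h0] using happly 0 h

theorem fderiv_fderiv_nonneg_of_isLocalMin_combGap {g p : E → ℝ} {a b : E} {lam : ℝ}
    (hg : ContDiff ℝ 2 g) (hp : ContDiff ℝ 2 p) (hmin : IsLocalMin (combGap lam g p) (a, b))
    (v : E) :
    0 ≤ (1 - lam) * fderiv ℝ (fderiv ℝ g) a v v + lam * fderiv ℝ (fderiv ℝ g) b v v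
      - fderiv ℝ (fderiv ℝ p) ((1 - lam) • a + lam • b) v v := by
  set ξ := (1 - lam) • a + lam • b
  have hline : IsLocalMin (fun s : ℝ => (1 - lam) * g (a + s • v) + lam * g (b + s • v)
      - p (ξ + s • v)) 0 := by
    convert IsLocalMin.comp_continuous (g := fun s : ℝ => (a + s • v, b + s • v)) (b := 0)
      (by simpa using hmin) (by fun_prop) using 1
    funext s
    simp only [Function.comp_apply, combGap]
    congr 2
    module
  have hg1 := hg.differentiable two_ne_zero
  have hp1 := hp.differentiable two_ne_zero
  refine hline.nonneg_of_hasDerivAt (fun s => (((hasDerivAt_comp_add_smul (hg1 _)).const_mul _).add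
    ((hasDerivAt_comp_add_smul (hg1 _)).const_mul _)).sub (hasDerivAt_comp_add_smul (hp1 _))) ?_
  have hsecond := (((hasDerivAt_fderiv_comp_add_smul hg a v v 0).const_mul (1 - lam)).add
    ((hasDerivAt_fderiv_comp_add_smul hg b v v 0).const_mul lam)).sub
    (hasDerivAt_fderiv_comp_add_smul hp ξ v v 0)
  simp only [zero_smul, add_zero] at hsecond
  exact hsecond

end Contact

section Hessian

open Matrix

variable {n : ℕ}

theorem hess_apply_eq_fderiv_fderiv {g : EuclideanSpace ℝ (Fin n) → ℝ} (hg : ContDiff ℝ 2 g)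
    (x : EuclideanSpace ℝ (Fin n)) (i j : Fin n) :
    hess n g x i j =
      fderiv ℝ (fderiv ℝ g) x (EuclideanSpace.single i 1) (EuclideanSpace.single j 1) := by
  have hdg : Differentiable ℝ (fderiv ℝ g) :=
    (hg.fderiv_right (m := 1) le_rfl).differentiable one_ne_zero
  rw [hess, Matrix.of_apply, fderiv_clm_apply (hdg x) (differentiableAt_const _)]
  simp

theorem hess_isHermitian {g : EuclideanSpace ℝ (Fin n) → ℝ} (hg : ContDiff ℝ 2 g)
    (x : EuclideanSpace ℝ (Fin n)) : (hess n g x).IsHermitian :=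
  Matrix.ext fun i j => by
    simp only [Matrix.conjTranspose_apply, star_trivial, hess_apply_eq_fderiv_fderiv hg]
    exact (hg.contDiffAt.isSymmSndFDerivAt (by simp)) _ _

theorem dotProduct_hess_mulVec {g : EuclideanSpace ℝ (Fin n) → ℝ} (hg : ContDiff ℝ 2 g)
    (x : EuclideanSpace ℝ (Fin n)) (v : Fin n → ℝ) :
    v ⬝ᵥ (hess n g x *ᵥ v) = fderiv ℝ (fderiv ℝ g) x (WithLp.toLp 2 v) (WithLp.toLp 2 v) := by
  have hv : WithLp.toLp 2 v = ∑ i, v i • EuclideanSpace.single i (1 : ℝ) := by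
    simpa using ((EuclideanSpace.basisFun (Fin n) ℝ).sum_repr (WithLp.toLp 2 v)).symm
  conv_rhs => rw [hv]
  simp only [dotProduct, mulVec, hess_apply_eq_fderiv_fderiv hg, Finset.mul_sum, map_sum, map_smul,
    _root_.sum_apply, _root_.smul_apply, smul_eq_mul]
  rw [Finset.sum_comm]
  exact Finset.sum_congr rfl fun i _ => Finset.sum_congr rfl fun j _ => by ring

theorem posSemidef_smul_hess_add_smul_hess_sub_hess {g p : EuclideanSpace ℝ (Fin n) → ℝ}
    (hg : ContDiff ℝ 2 g) (hp : ContDiff ℝ 2 p) {a b ξ : EuclideanSpace ℝ (Fin n)} {lam : ℝ}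
    (h : ∀ v, 0 ≤ (1 - lam) * fderiv ℝ (fderiv ℝ g) a v v + lam * fderiv ℝ (fderiv ℝ g) b v v
      - fderiv ℝ (fderiv ℝ p) ξ v v) :
    ((1 - lam) • hess n g a + lam • hess n g b - hess n p ξ).PosSemidef := by
  refine .of_dotProduct_mulVec_nonneg ((((hess_isHermitian hg a).smul (.all _)).add
    ((hess_isHermitian hg b).smul (.all _))).sub (hess_isHermitian hp ξ)) fun v => ?_
  simpa only [star_trivial, sub_mulVec, add_mulVec, smul_mulVec, dotProduct_sub, dotProduct_add,
    dotProduct_smul, dotProduct_hess_mulVec hg, dotProduct_hess_mulVec hp, smul_eq_mul]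
    using h (WithLp.toLp 2 v)

theorem deriv_gradient_hess_of_isLocalMin_combGap {u ψ : EuclideanSpace ℝ (Fin n) → ℝ → ℝ}
    {a b : EuclideanSpace ℝ (Fin n)} {τ lam : ℝ} (hlam0 : 0 < lam) (hlam1 : lam < 1)
    (hu : ContDiff ℝ 2 (u · τ)) (hdu : ∀ x, DifferentiableAt ℝ (u x) τ)
    (hψ : ContDiff ℝ 2 fun p : EuclideanSpace ℝ (Fin n) × ℝ => ψ p.1 p.2)
    (hmin : IsLocalMin (fun r => combGap lam (u · r.2) (ψ · r.2) r.1) ((a, b), τ)) :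
    let ξ := (1 - lam) • a + lam • b
    (1 - lam) * deriv (u a) τ + lam * deriv (u b) τ = deriv (ψ ξ) τ ∧
      gradient (u · τ) a = gradient (ψ · τ) ξ ∧ gradient (u · τ) b = gradient (ψ · τ) ξ ∧
      ((1 - lam) • hess n (u · τ) a + lam • hess n (u · τ) b - hess n (ψ · τ) ξ).PosSemidef := by
  intro ξ
  have hψτ : ContDiff ℝ 2 (ψ · τ) := hψ.comp (contDiff_id.prodMk contDiff_const)
  have hspace : IsLocalMin (combGap lam (u · τ) (ψ · τ)) (a, b) :=
    hmin.comp_continuous (g := fun q => (q, τ)) (by fun_prop)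
  obtain ⟨hDa, hDb⟩ := fderiv_eq_of_isLocalMin_combGap hlam0.ne' hlam1.ne
    (hu.differentiable two_ne_zero _) (hu.differentiable two_ne_zero _)
    (hψτ.differentiable two_ne_zero _) hspace
  refine ⟨deriv_eq_of_isLocalMin_sub (f₀ := u a) (f₁ := u b) (φ := ψ ξ) (hdu a) (hdu b)
    ((hψ.differentiable two_ne_zero _).comp τ
      ((differentiableAt_const _).prodMk differentiableAt_id))
    (hmin.comp_continuous (g := fun t => ((a, b), t)) (by fun_prop)),
    congrArg _ hDa, congrArg _ hDb, posSemidef_smul_hess_add_smul_hess_sub_hess hu hψτ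
    (fderiv_fderiv_nonneg_of_isLocalMin_combGap hu hψτ hspace)⟩

end Hessian

theorem stmt_8_general (n : ℕ) (T : ℝ)
    (H : EuclideanSpace ℝ (Fin n) → ℝ → ℝ → EuclideanSpace ℝ (Fin n) →
      Matrix (Fin n) (Fin n) ℝ → ℝ)
    (hH2 : ∀ x t v θ, ∀ A B : Matrix (Fin n) (Fin n) ℝ, (B - A).PosSemidef →
      H x t v θ A ≤ H x t v θ B)
    (hH3 : ∀ t ∈ Set.Ioo 0 T, ∀ θ : EuclideanSpace ℝ (Fin n),
      ConvexOn ℝ Set.univ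
        (fun p : EuclideanSpace ℝ (Fin n) × ℝ × Matrix (Fin n) (Fin n) ℝ =>
          H p.1 t p.2.1 θ p.2.2))
    (u : EuclideanSpace ℝ (Fin n) → ℝ → ℝ)
    (hu_x : ∀ t ∈ Set.Ioo 0 T, ContDiff ℝ 2 (fun x => u x t))
    (hu_t : ∀ x, DifferentiableOn ℝ (u x) (Set.Ioo 0 T))
    (heq : ∀ x, ∀ t ∈ Set.Ioo 0 T,
      deriv (u x) t = H x t (u x t) (gradient (fun y => u y t) x) (hess n (fun y => u y t) x))
    (hcoerc : ∀ t ∈ Set.Ioo 0 T,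
      Filter.Tendsto (fun x => u x t) (Bornology.cobounded _) Filter.atTop)
    (lam : ℝ) (hlam0 : 0 < lam) (hlam1 : lam < 1)
    (U : EuclideanSpace ℝ (Fin n) → ℝ → ℝ)
    (hU : ∀ x t, U x t = sInf {s : ℝ | ∃ x₀ x₁ : EuclideanSpace ℝ (Fin n),
      x = (1 - lam) • x₀ + lam • x₁ ∧ s = (1 - lam) * u x₀ t + lam * u x₁ t}) :
    ∀ (ψ : EuclideanSpace ℝ (Fin n) → ℝ → ℝ) (ξ : EuclideanSpace ℝ (Fin n)) (τ : ℝ),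
      τ ∈ Set.Ioo 0 T →
      ContDiff ℝ 2 (fun p : EuclideanSpace ℝ (Fin n) × ℝ => ψ p.1 p.2) →
      ψ ξ τ = U ξ τ → (∀ᶠ p in nhds (ξ, τ), ψ p.1 p.2 ≤ U p.1 p.2) →
      0 ≤ deriv (ψ ξ) τ -
        H ξ τ (ψ ξ τ) (gradient (fun y => ψ y τ) ξ) (hess n (fun y => ψ y τ) ξ) := by
  intro ψ ξ τ hτ hψ hψU hψle
  have hcoer : ∀ t ∈ Ioo 0 T, Tendsto (u · t) (cocompact _) atTop := fun t ht =>
    Metric.cobounded_eq_cocompact (α := EuclideanSpace ℝ (Fin n)) ▸ hcoerc t ht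
  have hbdd : ∀ᶠ t in 𝓝 τ, BddBelow (range (u · t)) := by
    filter_upwards [Ioo_mem_nhds hτ.1 hτ.2] with t ht
    exact (hu_x t ht).continuous.bddBelow_range_of_tendsto_cocompact (hcoer t ht)
  obtain ⟨a, b, rfl, hUξ⟩ := exists_infConv_eq (hu_x τ hτ).continuous (hcoer τ hτ) hlam0 hlam1 ξ
  have hcontact := hψU.trans ((hU _ _).trans hUξ)
  obtain ⟨htime, hga, hgb, hpsd⟩ := deriv_gradient_hess_of_isLocalMin_combGap hlam0 hlam1
    (hu_x τ hτ) (fun x => (hu_t x).differentiableAt (Ioo_mem_nhds hτ.1 hτ.2)) hψ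
    (isLocalMin_combGap hlam0.le hlam1.le hbdd (hψle.mono fun p hp => hp.trans_eq (hU _ _))
      hcontact)
  set ξ := (1 - lam) • a + lam • b
  set θ := gradient (ψ · τ) ξ
  have hconv := (hH3 τ hτ θ).2 (mem_univ (a, u a τ, hess n (u · τ) a))
    (mem_univ (b, u b τ, hess n (u · τ) b)) (sub_pos.2 hlam1).le hlam0.le (by ring)
  simp only [Prod.smul_mk, Prod.mk_add_mk, smul_eq_mul] at hconv
  rw [sub_nonneg]
  calc H ξ τ (ψ ξ τ) θ (hess n (ψ · τ) ξ)
      ≤ H ξ τ (ψ ξ τ) θ ((1 - lam) • hess n (u · τ) a + lam • hess n (u · τ) b) :=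
        hH2 _ _ _ _ _ _ hpsd
    _ ≤ (1 - lam) * H a τ (u a τ) θ (hess n (u · τ) a)
        + lam * H b τ (u b τ) θ (hess n (u · τ) b) := by rwa [hcontact]
    _ = deriv (ψ ξ) τ := by
        rw [← htime, heq a τ hτ, heq b τ hτ, hga, hgb]

/-- Proposition 3.1: let `H(x,t,v,θ,A)` be continuous (for `t ∈ (0,T)`), degenerate
elliptic, and for fixed `(t,θ)` convex in `(x,v,A)`. Let `u` be a classical solution of
`∂ₜu = H(x,t,u,∇u,∇²u)` on `ℝⁿ × (0,T)` with `u(x,t) → ∞` as `|x| → ∞` for each `t`.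
Then for `λ ∈ (0,1)` the infimal convolution
`U_λ(x,t) = inf{(1-λ)u(x₀,t) + λu(x₁,t) : x = (1-λ)x₀ + λx₁}`
is a viscosity supersolution of the same equation. -/
theorem stmt_8 (n : ℕ) (T : ℝ) (hT : 0 < T)
    (H : EuclideanSpace ℝ (Fin n) → ℝ → ℝ → EuclideanSpace ℝ (Fin n) →
      Matrix (Fin n) (Fin n) ℝ → ℝ)
    (hH1 : ContinuousOn
      (fun p : EuclideanSpace ℝ (Fin n) × ℝ × ℝ × EuclideanSpace ℝ (Fin n) ×
          Matrix (Fin n) (Fin n) ℝ =>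
        H p.1 p.2.1 p.2.2.1 p.2.2.2.1 p.2.2.2.2)
      {p | p.2.1 ∈ Set.Ioo 0 T})
    (hH2 : ∀ x t v θ, ∀ A B : Matrix (Fin n) (Fin n) ℝ, (B - A).PosSemidef →
      H x t v θ A ≤ H x t v θ B)
    (hH3 : ∀ t ∈ Set.Ioo 0 T, ∀ θ : EuclideanSpace ℝ (Fin n),
      ConvexOn ℝ Set.univ
        (fun p : EuclideanSpace ℝ (Fin n) × ℝ × Matrix (Fin n) (Fin n) ℝ =>
          H p.1 t p.2.1 θ p.2.2))
    (u : EuclideanSpace ℝ (Fin n) → ℝ → ℝ)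
    (hu_cont : ContinuousOn (fun p : EuclideanSpace ℝ (Fin n) × ℝ => u p.1 p.2)
      (Set.univ ×ˢ Set.Ico 0 T))
    (hu_x : ∀ t ∈ Set.Ioo 0 T, ContDiff ℝ 2 (fun x => u x t))
    (hu_t : ∀ x, DifferentiableOn ℝ (u x) (Set.Ioo 0 T))
    (heq : ∀ x, ∀ t ∈ Set.Ioo 0 T,
      deriv (u x) t = H x t (u x t) (gradient (fun y => u y t) x) (hess n (fun y => u y t) x))
    (hcoerc : ∀ t ∈ Set.Ioo 0 T,
      Filter.Tendsto (fun x => u x t) (Bornology.cobounded _) Filter.atTop)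
    (lam : ℝ) (hlam0 : 0 < lam) (hlam1 : lam < 1)
    (U : EuclideanSpace ℝ (Fin n) → ℝ → ℝ)
    (hU : ∀ x t, U x t = sInf {s : ℝ | ∃ x₀ x₁ : EuclideanSpace ℝ (Fin n),
      x = (1 - lam) • x₀ + lam • x₁ ∧ s = (1 - lam) * u x₀ t + lam * u x₁ t}) :
    ∀ (ψ : EuclideanSpace ℝ (Fin n) → ℝ → ℝ) (ξ : EuclideanSpace ℝ (Fin n)) (τ : ℝ),
      τ ∈ Set.Ioo 0 T →
      ContDiff ℝ 2 (fun p : EuclideanSpace ℝ (Fin n) × ℝ => ψ p.1 p.2) →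
      ψ ξ τ = U ξ τ → (∀ᶠ p in nhds (ξ, τ), ψ p.1 p.2 ≤ U p.1 p.2) →
      0 ≤ deriv (ψ ξ) τ -
        H ξ τ (ψ ξ τ) (gradient (fun y => ψ y τ) ξ) (hess n (fun y => ψ y τ) ξ) :=
  stmt_8_general n T H hH2 hH3 u hu_x hu_t heq hcoerc lam hlam0 hlam1 U hU
end

section
/- Let F be admissible on [0,∞) with lim_{r→∞} F(r) = ∞, and suppose ∫_{F(1)}^∞ e^{-Az²} f_F(z) dz = ∞ for every A > 0, where f_F is the inverse of F. If φ : ℝⁿ → [0,∞) is continuous, F-convex, and nonconstant, then ∫_{ℝⁿ} e^{-γ|x|²} φ(x) dx = ∞ for every γ > 0 (hence the heat flow starting from φ does not exist). -/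
/-!
A function with values in `[-∞, ∞)` that is convex and `-∞` at one point is `-∞` everywhere else,
so `F ∘ φ` is a real-valued convex function on `ℝⁿ`, hence continuous; it is nonconstant because
`F` is strictly increasing. If `F (φ a) < F (φ b)`, convexity along the rays from `a` gives
`F (φ x) ≥ F (φ a) + t κ` on a ball of fixed radius around `a + t (b - a)` for `t ≥ 1`, i.e.
`φ x ≥ f_F (F (φ a) + t κ)` there, while `‖x‖` grows only linearly in `t`. Summing over the
disjoint balls at integer `t` bounds the Gaussian integral of `φ` below by a series
`∑ₖ e^{-γ (α + β k)²} f_F (z₀ + κ k)`. Splitting `[z₀, ∞)` into intervals of length `κ`, on which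
`f_F` is monotone, bounds `∫ e^{-A z²} f_F (z) dz` by `κ` times this series once `A` is large,
so the series diverges.
-/

open MeasureTheory Set Metric Filter Topology
open scoped ENNReal

theorem lintegral_Ici_le_tsum_mul {q : ℝ → ℝ≥0∞} {z₀ δ : ℝ} (hδ : 0 < δ) {v : ℕ → ℝ≥0∞}
    (hv : ∀ k : ℕ, ∀ z ∈ Ico (z₀ + δ * k) (z₀ + δ * (k + 1)), q z ≤ v k) :
    ∫⁻ z in Ici z₀, q z ≤ ∑' k : ℕ, v k * ENNReal.ofReal δ := by
  have hcover : Ici z₀ = ⋃ k : ℕ, Ico (z₀ + δ * k) (z₀ + δ * (k + 1)) := by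
    have hunbdd : ¬BddAbove (range fun k : ℕ => z₀ + δ * k) := by
      rintro ⟨M, hM⟩
      obtain ⟨k, hk⟩ := exists_nat_gt ((M - z₀) / δ)
      have := hM (mem_range_self k)
      rw [div_lt_iff₀ hδ] at hk
      linarith
    simpa using (iUnion_Ico_map_succ_eq_Ici (f := fun k : ℕ => z₀ + δ * k)
      (fun k => by
        simp only [Nat.bot_eq_zero, CharP.cast_eq_zero, mul_zero, add_zero, le_add_iff_nonneg_right]
        positivity) hunbdd).symm
  calc ∫⁻ z in Ici z₀, q z
      ≤ ∑' k : ℕ, ∫⁻ z in Ico (z₀ + δ * k) (z₀ + δ * (k + 1)), q z := by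
        rw [hcover]; exact lintegral_iUnion_le _ _
    _ ≤ ∑' k : ℕ, ∫⁻ _ in Ico (z₀ + δ * k) (z₀ + δ * (k + 1)), v k :=
        ENNReal.tsum_le_tsum fun k => setLIntegral_mono' measurableSet_Ico (hv k)
    _ = ∑' k : ℕ, v k * ENNReal.ofReal δ := by
        refine tsum_congr fun k => ?_
        rw [setLIntegral_const, Real.volume_Ico]
        congr 2
        ring

theorem exists_pos_mul_sq_le {γ α β z₀ δ : ℝ} (hγ : 0 ≤ γ) (hα : 0 ≤ α) (hβ : 0 ≤ β)
    (hz₀ : 0 < z₀) (hδ : 0 < δ) :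
    ∃ A > 0, ∀ x : ℝ, 0 ≤ x → γ * (α + β * (x + 1)) ^ 2 ≤ A * (z₀ + δ * x) ^ 2 := by
  set M := max ((α + β) / z₀) (β / δ)
  have h₁ : α + β ≤ M * z₀ := (div_le_iff₀ hz₀).1 (le_max_left _ _)
  have h₂ : β ≤ M * δ := (div_le_iff₀ hδ).1 (le_max_right _ _)
  refine ⟨γ * M ^ 2 + 1, by positivity, fun x hx => ?_⟩
  have hlin : α + β * (x + 1) ≤ M * (z₀ + δ * x) := by nlinarith
  have hsq := pow_le_pow_left₀ (by positivity) hlin 2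
  nlinarith [sq_nonneg (z₀ + δ * x)]

theorem lintegral_Ici_eq_top_of_le {q : ℝ → ℝ≥0∞} {z₁ z₀ : ℝ} {C : ℝ≥0∞} (h : z₁ ≤ z₀)
    (hq : ∀ z ∈ Ico z₁ z₀, q z ≤ C) (hC : C ≠ ⊤) (htop : ∫⁻ z in Ici z₁, q z = ⊤) :
    ∫⁻ z in Ici z₀, q z = ⊤ := by
  have hfin : ∫⁻ z in Ico z₁ z₀, q z ≠ ⊤ := by
    refine ne_top_of_le_ne_top ?_ (setLIntegral_mono' measurableSet_Ico hq)
    rw [setLIntegral_const, Real.volume_Ico]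
    exact ENNReal.mul_ne_top hC ENNReal.ofReal_ne_top
  rw [← Ico_union_Ici_eq_Ici h, eq_top_iff] at htop
  have := htop.trans (lintegral_union_le _ _ _)
  rw [top_le_iff, ENNReal.add_eq_top] at this
  exact this.resolve_left hfin

theorem tsum_ofReal_exp_mul_eq_top {f : ℝ → ℝ} {z₁ : ℝ} (hf : MonotoneOn f (Ici z₁))
    (hf₀ : ∀ z ∈ Ici z₁, 0 ≤ f z)
    (hdiv : ∀ A : ℝ, 0 < A →
      ∫⁻ z in Ici z₁, ENNReal.ofReal (Real.exp (-A * z ^ 2) * f z) = ⊤)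
    {γ α β z₀ δ : ℝ} (hγ : 0 ≤ γ) (hα : 0 ≤ α) (hβ : 0 ≤ β) (hz₁ : z₁ ≤ z₀) (hz₀ : 0 < z₀)
    (hδ : 0 < δ) :
    ∑' k : ℕ, ENNReal.ofReal (Real.exp (-γ * (α + β * k) ^ 2) * f (z₀ + δ * k)) = ⊤ := by
  set u : ℕ → ℝ≥0∞ := fun k => ENNReal.ofReal (Real.exp (-γ * (α + β * k) ^ 2) * f (z₀ + δ * k))
  obtain ⟨A, hA, hAγ⟩ := exists_pos_mul_sq_le hγ hα hβ hz₀ hδ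
  have htail : ∫⁻ z in Ici z₀, ENNReal.ofReal (Real.exp (-A * z ^ 2) * f z) = ⊤ := by
    refine lintegral_Ici_eq_top_of_le hz₁ (C := ENNReal.ofReal (f z₀)) (fun z hz => ?_)
      ENNReal.ofReal_ne_top (hdiv A hA)
    refine ENNReal.ofReal_le_ofReal ?_
    have hexp : Real.exp (-A * z ^ 2) ≤ 1 := Real.exp_le_one_iff.2 (by nlinarith [sq_nonneg z])
    calc Real.exp (-A * z ^ 2) * f z ≤ 1 * f z :=
          mul_le_mul_of_nonneg_right hexp (hf₀ z hz.1)
      _ ≤ f z₀ := by rw [one_mul]; exact hf hz.1 hz₁ hz.2.le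
  have hbound : ∀ k : ℕ, ∀ z ∈ Ico (z₀ + δ * k) (z₀ + δ * (k + 1)),
      ENNReal.ofReal (Real.exp (-A * z ^ 2) * f z) ≤ u (k + 1) := by
    intro k z hz
    have hk : (0 : ℝ) ≤ k := k.cast_nonneg
    have hz₀z : z₀ ≤ z := le_trans (le_add_of_nonneg_right (by positivity)) hz.1
    have hexp : Real.exp (-A * z ^ 2) ≤ Real.exp (-γ * (α + β * (k + 1)) ^ 2) := by
      rw [Real.exp_le_exp]
      have hsq := mul_le_mul_of_nonneg_left (pow_le_pow_left₀ (by positivity) hz.1 2) hA.le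
      linarith [hAγ k hk]
    simp only [u]
    push_cast
    refine ENNReal.ofReal_le_ofReal
      (mul_le_mul hexp ?_ (hf₀ z (hz₁.trans hz₀z)) (Real.exp_pos _).le)
    exact hf (hz₁.trans hz₀z) (hz₁.trans (le_add_of_nonneg_right (by positivity))) hz.2.le
  have hshift : ∑' k : ℕ, u (k + 1) = ⊤ := by
    have := lintegral_Ici_le_tsum_mul hδ hbound
    rw [htail, top_le_iff, ENNReal.tsum_mul_right, ENNReal.mul_eq_top] at this
    rcases this with h | h
    · exact absurd h.2 ENNReal.ofReal_ne_top
    · exact h.1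
  rw [tsum_eq_zero_add' ENNReal.summable, hshift, add_top]

theorem tsum_mul_measure_ball_le_lintegral {E : Type*} [NormedAddCommGroup E] [MeasurableSpace E]
    [BorelSpace E] (μ : Measure E) [μ.IsAddHaarMeasure] {f : E → ℝ≥0∞} {p : ℕ → E} {ρ : ℝ}
    (hdisj : Pairwise (Function.onFun Disjoint fun k => ball (p k) ρ)) {u : ℕ → ℝ≥0∞}
    (hu : ∀ k, ∀ x ∈ ball (p k) ρ, u k ≤ f x) :
    (∑' k, u k) * μ (ball 0 ρ) ≤ ∫⁻ x, f x ∂μ :=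
  calc (∑' k, u k) * μ (ball 0 ρ)
      = ∑' k, ∫⁻ _ in ball (p k) ρ, u k ∂μ := by
        rw [← ENNReal.tsum_mul_right]
        refine tsum_congr fun k => ?_
        rw [setLIntegral_const, Measure.addHaar_ball_center μ (p k)]
    _ ≤ ∑' k, ∫⁻ x in ball (p k) ρ, f x ∂μ :=
        ENNReal.tsum_le_tsum fun k => setLIntegral_mono' measurableSet_ball (hu k)
    _ = ∫⁻ x in ⋃ k, ball (p k) ρ, f x ∂μ :=
        (lintegral_iUnion (fun _ => measurableSet_ball) hdisj f).symm
    _ ≤ ∫⁻ x, f x ∂μ := setLIntegral_le_lintegral _ _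

theorem pairwise_disjoint_ball_add_smul {E : Type*} [NormedAddCommGroup E] [NormedSpace ℝ E]
    (p θ : E) {ρ : ℝ} (hρ : 2 * ρ ≤ ‖θ‖) :
    Pairwise (Function.onFun Disjoint fun k : ℕ => ball (p + (k : ℝ) • θ) ρ) := by
  intro i j hij
  apply ball_disjoint_ball
  have hij' : (1 : ℝ) ≤ |(i : ℝ) - j| := by
    have : (1 : ℤ) ≤ |(i : ℤ) - j| := Int.one_le_abs (sub_ne_zero.2 (by exact_mod_cast hij))
    exact_mod_cast this
  rw [dist_eq_norm, add_sub_add_left_eq_sub, ← sub_smul, norm_smul, Real.norm_eq_abs]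
  nlinarith [norm_nonneg θ]

theorem lintegral_exp_mul_eq_top_of_forall_mem_ball {E : Type*} [NormedAddCommGroup E]
    [NormedSpace ℝ E] [MeasurableSpace E] [BorelSpace E]
    (μ : Measure E) [μ.IsAddHaarMeasure] {f : ℝ → ℝ} {z₁ : ℝ} (hf : MonotoneOn f (Ici z₁))
    (hf₀ : ∀ z ∈ Ici z₁, 0 ≤ f z)
    (hdiv : ∀ A : ℝ, 0 < A →
      ∫⁻ z in Ici z₁, ENNReal.ofReal (Real.exp (-A * z ^ 2) * f z) = ⊤)
    {ψ : E → ℝ} {p θ : E} {ρ z₀ κ γ : ℝ} (hρ : 0 < ρ) (hρθ : 2 * ρ ≤ ‖θ‖) (hz₁ : z₁ ≤ z₀)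
    (hz₀ : 0 < z₀) (hκ : 0 < κ) (hγ : 0 ≤ γ)
    (hψ : ∀ k : ℕ, ∀ x ∈ ball (p + (k : ℝ) • θ) ρ, f (z₀ + κ * k) ≤ ψ x) :
    ∫⁻ x, ENNReal.ofReal (Real.exp (-γ * ‖x‖ ^ 2) * ψ x) ∂μ = ⊤ := by
  have hsum := tsum_ofReal_exp_mul_eq_top hf hf₀ hdiv hγ (α := ‖p‖ + ρ) (β := ‖θ‖)
    (by positivity) (norm_nonneg θ) hz₁ hz₀ hκ
  refine top_le_iff.1 <| calc
    ⊤ = (∑' k : ℕ, ENNReal.ofReal (Real.exp (-γ * (‖p‖ + ρ + ‖θ‖ * k) ^ 2) * f (z₀ + κ * k)))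
          * μ (ball 0 ρ) := by rw [hsum, ENNReal.top_mul (measure_ball_pos μ 0 hρ).ne']
    _ ≤ _ := tsum_mul_measure_ball_le_lintegral μ (pairwise_disjoint_ball_add_smul p θ hρθ)
          fun k x hx => ?_
  have hnorm : ‖x‖ ≤ ‖p‖ + ρ + ‖θ‖ * k := by
    have := norm_le_insert' x (p + (k : ℝ) • θ)
    have := norm_add_le p ((k : ℝ) • θ)
    rw [norm_smul, Real.norm_natCast] at this
    rw [mem_ball, dist_eq_norm] at hx
    linarith
  have hexp : Real.exp (-γ * (‖p‖ + ρ + ‖θ‖ * k) ^ 2) ≤ Real.exp (-γ * ‖x‖ ^ 2) := by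
    rw [Real.exp_le_exp]
    nlinarith [pow_le_pow_left₀ (norm_nonneg x) hnorm 2]
  exact ENNReal.ofReal_le_ofReal (mul_le_mul hexp (hψ k x hx)
    (hf₀ _ (hz₁.trans (le_add_of_nonneg_right (by positivity)))) (Real.exp_pos _).le)

section ConvexGrowth

variable {E : Type*} [NormedAddCommGroup E] [NormedSpace ℝ E] {g : E → ℝ}

theorem ConvexOn.add_mul_sub_le (hg : ConvexOn ℝ univ g) (a y : E) {t : ℝ} (ht : 1 ≤ t) :
    g a + t * (g y - g a) ≤ g (a + t • (y - a)) := by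
  have ht₀ : 0 < t := by linarith
  have hy : (1 - t⁻¹) • a + t⁻¹ • (a + t • (y - a)) = y := by
    rw [smul_add, smul_smul, inv_mul_cancel₀ ht₀.ne', one_smul, sub_smul, one_smul]; abel
  have key := hg.2 (mem_univ a) (mem_univ (a + t • (y - a)))
    (sub_nonneg.2 (inv_le_one_of_one_le₀ ht)) (inv_nonneg.2 ht₀.le) (sub_add_cancel 1 t⁻¹)
  rw [hy, smul_eq_mul, smul_eq_mul] at key
  have := mul_le_mul_of_nonneg_left key ht₀.le
  rw [mul_add, ← mul_assoc, ← mul_assoc, mul_sub, mul_inv_cancel₀ ht₀.ne'] at this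
  linarith

theorem ConvexOn.add_mul_le_of_mem_ball (hg : ConvexOn ℝ univ g) {a b : E} {κ ε t : ℝ}
    (hb : ∀ y ∈ ball b ε, g a + κ ≤ g y) (ht : 1 ≤ t) {x : E}
    (hx : x ∈ ball (a + t • (b - a)) (t * ε)) : g a + t * κ ≤ g x := by
  have ht₀ : 0 < t := by linarith
  set y := a + t⁻¹ • (x - a)
  have hxy : x = a + t • (y - a) := by
    simp only [y, add_sub_cancel_left, smul_smul, mul_inv_cancel₀ ht₀.ne', one_smul,
      add_sub_cancel]
  have hyb : y ∈ ball b ε := by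
    have : y - b = t⁻¹ • (x - (a + t • (b - a))) := by
      simp only [y, smul_sub, smul_add, smul_smul, inv_mul_cancel₀ ht₀.ne', one_smul]; abel
    rw [mem_ball, dist_eq_norm, this, norm_smul, Real.norm_of_nonneg (inv_nonneg.2 ht₀.le),
      inv_mul_lt_iff₀ ht₀, ← dist_eq_norm]
    exact hx
  have := hg.add_mul_sub_le a y ht
  rw [← hxy] at this
  nlinarith [hb y hyb]

theorem ConvexOn.exists_forall_mem_ball_add_mul_le [FiniteDimensional ℝ E]
    (hg : ConvexOn ℝ univ g) {a b : E} (hab : g a < g b) :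
    ∃ κ > 0, ∃ ε > 0, ∀ t ≥ 1, ∀ x ∈ ball (a + t • (b - a)) ε, g a + t * κ ≤ g x := by
  have hcont : Continuous g := continuousOn_univ.1 (hg.continuousOn isOpen_univ)
  set κ := (g b - g a) / 2
  obtain ⟨ε, hε, hball⟩ := Metric.eventually_nhds_iff_ball.1
    ((hcont.tendsto b).eventually (lt_mem_nhds (show g a + κ < g b by simp only [κ]; linarith)))
  refine ⟨κ, by simp only [κ]; linarith, ε, hε, fun t ht x hx => ?_⟩
  refine hg.add_mul_le_of_mem_ball (fun y hy => (hball y hy).le) ht (ball_subset_ball ?_ hx)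
  nlinarith

end ConvexGrowth

section Inverse

variable {F : ℝ → EReal} {fF : ℝ → ℝ} {z₁ : ℝ}

theorem exists_one_le_apply_eq_and_inv_eq (hcont : ContinuousOn F (Ioi 0))
    (htop : Tendsto F atTop (𝓝 ⊤)) (hinv : ∀ r : ℝ, 0 < r → fF (F r).toReal = r)
    (hz₁ : F 1 = z₁) {z : ℝ} (hz : z₁ ≤ z) : ∃ r, 1 ≤ r ∧ F r = z ∧ fF z = r := by
  obtain ⟨b, hzb, hb⟩ := ((htop.eventually (lt_mem_nhds (EReal.coe_lt_top z))).and
    (eventually_ge_atTop 1)).exists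
  obtain ⟨r, hr, hFr⟩ := intermediate_value_Icc hb
    (hcont.mono fun x hx => lt_of_lt_of_le one_pos hx.1)
    ⟨hz₁ ▸ EReal.coe_le_coe_iff.2 hz, hzb.le⟩
  refine ⟨r, hr.1, hFr, ?_⟩
  rw [← hinv r (by linarith [hr.1]), hFr, EReal.toReal_coe]

theorem inv_le_of_coe_le_apply (hmono : StrictMonoOn F (Ici 0))
    (hF : ∀ z, z₁ ≤ z → ∃ r, 1 ≤ r ∧ F r = z ∧ fF z = r) {z s : ℝ} (hz : z₁ ≤ z) (hs : 0 ≤ s)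
    (hzs : (z : EReal) ≤ F s) : fF z ≤ s := by
  obtain ⟨r, hr, hFr, hfr⟩ := hF z hz
  rw [hfr, ← hmono.le_iff_le (mem_Ici.2 (by linarith)) hs, hFr]
  exact hzs

theorem one_le_inv (hF : ∀ z, z₁ ≤ z → ∃ r, 1 ≤ r ∧ F r = z ∧ fF z = r) {z : ℝ} (hz : z₁ ≤ z) :
    1 ≤ fF z := by
  obtain ⟨r, hr, -, hfr⟩ := hF z hz
  exact hfr ▸ hr

theorem monotoneOn_inv (hmono : StrictMonoOn F (Ici 0))
    (hF : ∀ z, z₁ ≤ z → ∃ r, 1 ≤ r ∧ F r = z ∧ fF z = r) : MonotoneOn fF (Ici z₁) := by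
  intro z hz z' hz' hzz'
  obtain ⟨r', hr', hFr', hfr'⟩ := hF z' hz'
  rw [hfr']
  exact inv_le_of_coe_le_apply hmono hF hz (by linarith) (hFr' ▸ EReal.coe_le_coe_iff.2 hzz')

end Inverse

section ExtendedConvexity

variable {E : Type*} [AddCommGroup E] [Module ℝ E]

theorem ne_bot_of_ne_bot_of_convex {G : E → EReal}
    (hG : ∀ x y : E, ∀ lam : ℝ, 0 < lam → lam < 1 →
      G ((1 - lam) • x + lam • y) ≤ ((1 - lam : ℝ) : EReal) * G x + ((lam : ℝ) : EReal) * G y)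
    {b : E} (hb : G b ≠ ⊥) (x : E) : G x ≠ ⊥ := by
  intro hx
  have hmid : (1 - 2⁻¹ : ℝ) • x + (2⁻¹ : ℝ) • ((2 : ℝ) • b - x) = b := by
    rw [smul_sub, smul_smul]; norm_num
  have := hG x ((2 : ℝ) • b - x) 2⁻¹ (by norm_num) (by norm_num)
  rw [hmid, hx, EReal.coe_mul_bot_of_pos (by norm_num), EReal.bot_add] at this
  exact hb (le_bot_iff.1 this)

theorem convexOn_univ_of_coe {g : E → ℝ}
    (hg : ∀ x y : E, ∀ lam : ℝ, 0 < lam → lam < 1 →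
      ((g ((1 - lam) • x + lam • y) : ℝ) : EReal) ≤
        ((1 - lam : ℝ) : EReal) * g x + ((lam : ℝ) : EReal) * g y) :
    ConvexOn ℝ univ g := by
  refine convexOn_iff_forall_pos.2 ⟨convex_univ, fun x _ y _ s t hs ht hst => ?_⟩
  obtain rfl : s = 1 - t := by linarith
  have := hg x y t ht (by linarith)
  rw [← EReal.coe_mul, ← EReal.coe_mul, ← EReal.coe_add, EReal.coe_le_coe_iff] at this
  exact this

end ExtendedConvexity

theorem stmt_9_general (n : ℕ) (F : ℝ → EReal)
    (hmono : StrictMonoOn F (Set.Ici 0))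
    (hcont : ContinuousOn F (Set.Ioi 0))
    (hnotop : ∀ r : ℝ, 0 ≤ r → F r ≠ ⊤)
    (htop : Filter.Tendsto F Filter.atTop (nhds ⊤))
    (fF : ℝ → ℝ) (hinv : ∀ r : ℝ, 0 < r → fF ((F r).toReal) = r)
    (z₁ : ℝ) (hz₁ : F 1 = (z₁ : EReal))
    (hdiv : ∀ A : ℝ, 0 < A →
      ∫⁻ z in Set.Ici z₁, ENNReal.ofReal (Real.exp (-A * z ^ 2) * fF z) = ⊤)
    (φ : EuclideanSpace ℝ (Fin n) → ℝ) (hφ0 : ∀ x, 0 ≤ φ x)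
    (hFconv : ∀ x y : EuclideanSpace ℝ (Fin n), ∀ lam : ℝ, 0 < lam → lam < 1 →
      F (φ ((1 - lam) • x + lam • y)) ≤
        ((1 - lam : ℝ) : EReal) * F (φ x) + ((lam : ℝ) : EReal) * F (φ y))
    (hnc : ∃ x y, φ x ≠ φ y) :
    ∀ γ : ℝ, 0 < γ →
      ∫⁻ x : EuclideanSpace ℝ (Fin n),
        ENNReal.ofReal (Real.exp (-γ * ‖x‖ ^ 2) * φ x) = ⊤ := by
  intro γ hγ
  have hF : ∀ z, z₁ ≤ z → ∃ r, 1 ≤ r ∧ F r = z ∧ fF z = r := fun z hz =>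
    exists_one_le_apply_eq_and_inv_eq hcont htop hinv hz₁ hz
  obtain ⟨a, b, hab⟩ : ∃ a b, φ a < φ b := by
    obtain ⟨x, y, hxy⟩ := hnc
    rcases hxy.lt_or_gt with h | h
    exacts [⟨x, y, h⟩, ⟨y, x, h⟩]
  have hFab : F (φ a) < F (φ b) := hmono (hφ0 a) (hφ0 b) hab
  set g := fun x => (F (φ x)).toReal
  have hg_coe : ∀ x, F (φ x) = g x := fun x => (EReal.coe_toReal (hnotop _ (hφ0 x))
    (ne_bot_of_ne_bot_of_convex (G := fun x => F (φ x)) hFconv hFab.ne_bot x)).symm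
  have hg : ConvexOn ℝ univ g := convexOn_univ_of_coe (by simpa only [hg_coe] using hFconv)
  obtain ⟨κ, hκ, ε, hε, hgrowth⟩ := hg.exists_forall_mem_ball_add_mul_le
    (by simpa only [hg_coe, EReal.coe_lt_coe_iff] using hFab)
  obtain ⟨t₀, ht₀, hz₀⟩ : ∃ t₀ : ℝ, 1 ≤ t₀ ∧ max z₁ 1 ≤ g a + κ * t₀ :=
    ⟨max 1 ((max z₁ 1 - g a) / κ), le_max_left _ _,
      sub_le_iff_le_add'.1 ((div_le_iff₀' hκ).1 (le_max_right _ _))⟩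
  have hθ : 0 < ‖b - a‖ := norm_pos_iff.2 (sub_ne_zero.2 (by rintro rfl; exact hab.false))
  refine lintegral_exp_mul_eq_top_of_forall_mem_ball volume (monotoneOn_inv hmono hF)
    (fun z hz => zero_le_one.trans (one_le_inv hF hz)) hdiv (p := a + t₀ • (b - a))
    (lt_min hε (half_pos hθ)) ((le_div_iff₀' two_pos).1 (min_le_right _ _))
    ((le_max_left _ _).trans hz₀) (one_pos.trans_le ((le_max_right _ _).trans hz₀)) hκ hγ.le
    fun k x hx => inv_le_of_coe_le_apply hmono hF ?_ (hφ0 x) ?_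
  · linarith [le_max_left z₁ 1, mul_nonneg hκ.le k.cast_nonneg]
  · have hx' : x ∈ ball (a + (t₀ + k) • (b - a)) ε := by
      rw [add_smul, ← add_assoc]
      exact ball_subset_ball (min_le_left _ _) hx
    have := hgrowth (t₀ + k) (by linarith [k.cast_nonneg (α := ℝ)]) x hx'
    rw [hg_coe, EReal.coe_le_coe_iff]
    linarith

/-- Theorem 1.1 (2), key step: let `F` be admissible on `[0,∞)` with `F(r) → ∞` as `r → ∞`
and suppose `∫_{F(1)}^∞ e^{-Az²} f_F(z) dz = ∞` for every `A > 0`, where `f_F` is the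
inverse of `F`. If `φ : ℝⁿ → [0,∞)` is continuous, `F`-convex, and nonconstant, then
`∫ e^{-γ|x|²} φ(x) dx = ∞` for every `γ > 0`. -/
theorem stmt_9 (n : ℕ) (F : ℝ → EReal)
    (hmono : StrictMonoOn F (Set.Ici 0))
    (hcont : ContinuousOn F (Set.Ioi 0))
    (h0 : Filter.Tendsto F (nhdsWithin 0 (Set.Ioi 0)) (nhds (F 0)))
    (hnotop : ∀ r : ℝ, 0 ≤ r → F r ≠ ⊤)
    (htop : Filter.Tendsto F Filter.atTop (nhds ⊤))
    (fF : ℝ → ℝ) (hinv : ∀ r : ℝ, 0 < r → fF ((F r).toReal) = r)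
    (z₁ : ℝ) (hz₁ : F 1 = (z₁ : EReal))
    (hdiv : ∀ A : ℝ, 0 < A →
      ∫⁻ z in Set.Ici z₁, ENNReal.ofReal (Real.exp (-A * z ^ 2) * fF z) = ⊤)
    (φ : EuclideanSpace ℝ (Fin n) → ℝ) (hφc : Continuous φ) (hφ0 : ∀ x, 0 ≤ φ x)
    (hFconv : ∀ x y : EuclideanSpace ℝ (Fin n), ∀ lam : ℝ, 0 < lam → lam < 1 →
      F (φ ((1 - lam) • x + lam • y)) ≤
        ((1 - lam : ℝ) : EReal) * F (φ x) + ((lam : ℝ) : EReal) * F (φ y))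
    (hnc : ∃ x y, φ x ≠ φ y) :
    ∀ γ : ℝ, 0 < γ →
      ∫⁻ x : EuclideanSpace ℝ (Fin n),
        ENNReal.ofReal (Real.exp (-γ * ‖x‖ ^ 2) * φ x) = ⊤ :=
  stmt_9_general n F hmono hcont hnotop htop fF hinv z₁ hz₁ hdiv φ hφ0 hFconv hnc
end

section
/- Let g : J → ℝ be convex and non-increasing on an interval J = (c, ∞) (c ≥ -∞), and suppose a C² function f on J satisfies f' > 0 and (log f')' = g, with lim_{z→∞} f(z) = ∞. If there exists z₃ ∈ J with g(z₃) < 0, then f is bounded above on [z₃,∞), a contradiction; hence g ≥ 0 on J, i.e., f is convex on J. -/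
/-!
Write `L = log f'`, so that `L' = g`. If `g (z₃) = C < 0`, then `g ≤ C` on `[z₃, ∞)` since `g` is
non-increasing, hence `f' (w) ≤ f' (z₃) e^{C (w - z₃)}` there, and integrating once more bounds `f`
on `[z₃, ∞)` by `f (z₃) - f' (z₃) / C`, contradicting `f → ∞`. Thus `g ≥ 0`, so `L` and with it
`f' = e^L` are non-decreasing, and `f` is convex.
-/

open Set Filter Real

lemma isOpen_setOf_coe_lt (c : EReal) : IsOpen {z : ℝ | c < (z : EReal)} :=
  isOpen_Ioi.preimage continuous_coe_real_ereal

lemma Ici_subset_setOf_coe_lt {c : EReal} {a : ℝ} (ha : c < (a : EReal)) :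
    Ici a ⊆ {z : ℝ | c < (z : EReal)} :=
  fun _ hz => ha.trans_le (EReal.coe_le_coe_iff.2 hz)

lemma convex_setOf_coe_lt (c : EReal) : Convex ℝ {z : ℝ | c < (z : EReal)} :=
  OrdConnected.convex ⟨fun _ hx _ _ _ hz => Ici_subset_setOf_coe_lt hx hz.1⟩

lemma hasDerivAt_log_deriv {f g : ℝ → ℝ} {s : Set ℝ} (hs : IsOpen s) (hf : ContDiffOn ℝ 2 f s)
    (hf' : ∀ z ∈ s, 0 < deriv f z)
    (hlog : ∀ z ∈ s, deriv (fun w => log (deriv f w)) z = g z) {z : ℝ} (hz : z ∈ s) :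
    HasDerivAt (fun w => log (deriv f w)) (g z) z := by
  have hf1 : ContDiffOn ℝ 1 (deriv f) s := hf.deriv_of_isOpen hs (by norm_num)
  have hf1z : DifferentiableAt ℝ (deriv f) z :=
    (hf1.differentiableOn one_ne_zero z hz).differentiableAt (hs.mem_nhds hz)
  exact hlog z hz ▸ (hf1z.log (hf' z hz).ne').hasDerivAt

lemma le_mul_exp_of_hasDerivAt_log_le {u L' : ℝ → ℝ} {a C : ℝ} (hu : ∀ w ∈ Ici a, 0 < u w)
    (hL : ∀ w ∈ Ici a, HasDerivAt (fun w => log (u w)) (L' w) w)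
    (hL' : ∀ w ∈ Ici a, L' w ≤ C) {w : ℝ} (hw : a ≤ w) :
    u w ≤ u a * exp (C * (w - a)) := by
  have hmvt : log (u w) - log (u a) ≤ C * (w - a) :=
    (convex_Ici a).image_sub_le_mul_sub_of_deriv_le
      (fun x hx => (hL x hx).continuousAt.continuousWithinAt)
      (fun x hx => (hL x (interior_subset hx)).differentiableAt.differentiableWithinAt)
      (fun x hx => (hL x (interior_subset hx)).deriv ▸ hL' x (interior_subset hx))
      a self_mem_Ici w hw hw
  calc u w = exp (log (u w)) := (exp_log (hu w hw)).symm
    _ ≤ exp (log (u a) + C * (w - a)) := exp_le_exp.2 (by linarith)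
    _ = u a * exp (C * (w - a)) := by rw [exp_add, exp_log (hu a self_mem_Ici)]

lemma le_sub_div_of_hasDerivAt_le_mul_exp {f f' : ℝ → ℝ} {a A C : ℝ} (hA : 0 ≤ A) (hC : C < 0)
    (hf : ∀ w ∈ Ici a, HasDerivAt f (f' w) w)
    (hf' : ∀ w ∈ Ici a, f' w ≤ A * exp (C * (w - a))) {w : ℝ} (hw : a ≤ w) :
    f w ≤ f a - A / C := by
  have hE : ∀ x, HasDerivAt (fun x => A / C * exp (C * (x - a))) (A * exp (C * (x - a))) x := by
    intro x
    refine ((((hasDerivAt_id' x).sub_const a).const_mul C).exp.const_mul (A / C)).congr_deriv ?_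
    field_simp [hC.ne]
  have hanti : AntitoneOn (fun x => f x - A / C * exp (C * (x - a))) (Ici a) :=
    antitoneOn_of_hasDerivWithinAt_nonpos (convex_Ici a)
      (fun x hx => ((hf x hx).sub (hE x)).continuousAt.continuousWithinAt)
      (fun x hx => ((hf x (interior_subset hx)).sub (hE x)).hasDerivWithinAt)
      (fun x hx => sub_nonpos.2 (hf' x (interior_subset hx)))
  have hcorrection : A / C * exp (C * (w - a)) ≤ 0 :=
    mul_nonpos_of_nonpos_of_nonneg (div_nonpos_of_nonneg_of_nonpos hA hC.le) (exp_pos _).le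
  have := hanti self_mem_Ici hw hw
  simp only [sub_self, mul_zero, exp_zero, mul_one] at this
  linarith

lemma convexOn_of_monotoneOn_log_deriv {f : ℝ → ℝ} {s : Set ℝ} (hs : Convex ℝ s)
    (hf : DifferentiableOn ℝ f s) (hf' : ∀ z ∈ s, 0 < deriv f z)
    (hmono : MonotoneOn (fun w => log (deriv f w)) s) : ConvexOn ℝ s f :=
  MonotoneOn.convexOn_of_deriv hs hf.continuousOn (hf.mono interior_subset)
    fun _ hx _ hy hxy =>
      (log_le_log_iff (hf' _ (interior_subset hx)) (hf' _ (interior_subset hy))).1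
        (hmono (interior_subset hx) (interior_subset hy) hxy)

theorem stmt_11_general (c : EReal) (J : Set ℝ) (hJ : J = {z : ℝ | c < (z : EReal)})
    (g f : ℝ → ℝ)
    (hganti : AntitoneOn g J)
    (hf : ContDiffOn ℝ 2 f J) (hf' : ∀ z ∈ J, 0 < deriv f z)
    (hlog : ∀ z ∈ J, deriv (fun w => Real.log (deriv f w)) z = g z)
    (htop : Filter.Tendsto f Filter.atTop Filter.atTop) :
    (∀ z ∈ J, 0 ≤ g z) ∧ ConvexOn ℝ J f := by
  have hopen : IsOpen J := hJ ▸ isOpen_setOf_coe_lt c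
  have hconv : Convex ℝ J := hJ ▸ convex_setOf_coe_lt c
  have hIci : ∀ a ∈ J, Ici a ⊆ J := hJ ▸ fun _ => Ici_subset_setOf_coe_lt
  have hL : ∀ z ∈ J, HasDerivAt (fun w => log (deriv f w)) (g z) z :=
    fun _ => hasDerivAt_log_deriv hopen hf hf' hlog
  have hfd : ∀ z ∈ J, HasDerivAt f (deriv f z) z := fun z hz =>
    ((hf.differentiableOn two_ne_zero z hz).differentiableAt (hopen.mem_nhds hz)).hasDerivAt
  have hg : ∀ z ∈ J, 0 ≤ g z := by
    intro a ha
    by_contra! hga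
    have hsub := hIci a ha
    have hbound w (hw : a ≤ w) : f w ≤ f a - deriv f a / g a :=
      le_sub_div_of_hasDerivAt_le_mul_exp (hf' a ha).le hga (fun x hx => hfd x (hsub hx))
        (fun x hx => le_mul_exp_of_hasDerivAt_log_le (fun y hy => hf' y (hsub hy))
          (fun y hy => hL y (hsub hy)) (fun y hy => hganti ha (hsub hy) hy) hx) hw
    obtain ⟨w, hfw, haw⟩ :=
      ((htop.eventually_gt_atTop (f a - deriv f a / g a)).and (eventually_ge_atTop a)).exists
    exact (hbound w haw).not_gt hfw
  refine ⟨hg, convexOn_of_monotoneOn_log_deriv hconv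
    (fun z hz => (hfd z hz).differentiableAt.differentiableWithinAt) hf' ?_⟩
  exact monotoneOn_of_hasDerivWithinAt_nonneg hconv
    (fun z hz => (hL z hz).continuousAt.continuousWithinAt)
    (fun z hz => (hL z (interior_subset hz)).hasDerivWithinAt)
    (fun z hz => hg z (interior_subset hz))

/-- Step (3.24) in the proof of Theorem 1.2: let `g` be convex and non-increasing on an
interval `J = (c,∞)` (with `c ≥ -∞`), and let `f` be `C²` on `J` with `f' > 0`,
`(log f')' = g`, and `f(z) → ∞` as `z → ∞`. Then `g ≥ 0` on `J`, i.e. `f` is convex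
on `J`. -/
theorem stmt_11 (c : EReal) (J : Set ℝ) (hJ : J = {z : ℝ | c < (z : EReal)})
    (g f : ℝ → ℝ)
    (hgconv : ConvexOn ℝ J g) (hganti : AntitoneOn g J)
    (hf : ContDiffOn ℝ 2 f J) (hf' : ∀ z ∈ J, 0 < deriv f z)
    (hlog : ∀ z ∈ J, deriv (fun w => Real.log (deriv f w)) z = g z)
    (htop : Filter.Tendsto f Filter.atTop Filter.atTop) :
    (∀ z ∈ J, 0 ≤ g z) ∧ ConvexOn ℝ J f :=
  stmt_11_general c J hJ g f hganti hf hf' hlog htop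
end

section
/- Let f : J → (0,∞) be C² on an interval J = (c,∞) with f' > 0, lim_{z→∞} f(z) = ∞, and suppose g := (log f')' = f''/f' is convex on J. If for every A > 0 one has ∫_{z₀}^∞ e^{-Az²} f(z) dz < ∞ (some z₀ ∈ J), then g is non-increasing on J. -/
open MeasureTheory Filter Set Real Topology

/-!
If `g` is not non-increasing, then `g(a) < g(b)` for some `a < b`, and convexity puts `g` above
the secant line through `a` and `b` on `[b, ∞)`, a line of positive slope `s`. Integrating
`(log f')' = g` twice gives `f' ≥ exp (s z² / 2 + O(z))` and then `f ≥ exp (s z² / 4) + O(1)`,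
so `exp (-s z² / 8) f(z) → ∞`, which is incompatible with integrability on a half-line.
-/

theorem ConvexOn.add_slope_mul_sub_le {𝕜 : Type*} [Field 𝕜] [LinearOrder 𝕜]
    [IsStrictOrderedRing 𝕜] {s : Set 𝕜} {g : 𝕜 → 𝕜} (hg : ConvexOn 𝕜 s g)
    {a b z : 𝕜} (ha : a ∈ s) (hb : b ∈ s) (hz : z ∈ s) (hab : a < b) (hbz : b ≤ z) :
    g a + (g b - g a) / (b - a) * (z - a) ≤ g z := by
  have hza : 0 < z - a := by linarith
  have hsecant := hg.secant_mono ha hb hz hab.ne' (by linarith) hbz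
  rw [le_div_iff₀ hza] at hsecant
  linarith

theorem sub_le_sub_of_hasDerivAt_le {F G F' G' : ℝ → ℝ} {b : ℝ}
    (hF : ∀ z, b ≤ z → HasDerivAt F (F' z) z)
    (hG : ∀ z, b ≤ z → HasDerivAt G (G' z) z)
    (hle : ∀ z, b ≤ z → G' z ≤ F' z) {z : ℝ} (hz : b ≤ z) :
    G z - G b ≤ F z - F b := by
  have hmono : MonotoneOn (F - G) (Ici b) := by
    refine monotoneOn_of_hasDerivWithinAt_nonneg (f' := F' - G') (convex_Ici b)
      (fun x hx => ((hF x hx).sub (hG x hx)).continuousAt.continuousWithinAt) ?_ ?_ <;>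
      rw [interior_Ici] <;> intro x hx
    · exact ((hF x hx.le).sub (hG x hx.le)).hasDerivWithinAt
    · exact sub_nonneg.2 (hle x hx.le)
  have := hmono self_mem_Ici (mem_Ici.2 hz) hz
  simp only [Pi.sub_apply] at this
  linarith

theorem exists_exp_quadratic_le_of_hasDerivAt_log {u u' : ℝ → ℝ} {b s β : ℝ}
    (hu : ∀ z, b ≤ z → 0 < u z)
    (hlog : ∀ z, b ≤ z → HasDerivAt (fun w => log (u w)) (u' z) z)
    (hle : ∀ z, b ≤ z → s * z + β ≤ u' z) :
    ∃ C, ∀ z, b ≤ z → exp (s / 2 * z ^ 2 + β * z + C) ≤ u z := by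
  refine ⟨log (u b) - (s / 2 * b ^ 2 + β * b), fun z hz => ?_⟩
  have hquad : ∀ x, HasDerivAt (fun w => s / 2 * w ^ 2 + β * w) (s * x + β) x := fun x =>
    (((hasDerivAt_pow 2 x).const_mul (s / 2)).add ((hasDerivAt_id x).const_mul β)).congr_deriv
      (by ring)
  have := sub_le_sub_of_hasDerivAt_le hlog (fun x _ => hquad x) hle hz
  calc exp (s / 2 * z ^ 2 + β * z + (log (u b) - (s / 2 * b ^ 2 + β * b)))
      ≤ exp (log (u z)) := exp_le_exp.2 (by linarith)
    _ = u z := exp_log (hu z hz)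

theorem eventually_mul_le_exp_quadratic {a : ℝ} (ha : 0 < a) (c β C : ℝ) :
    ∀ᶠ z in atTop, c * z ≤ exp (a * z ^ 2 + β * z + C) := by
  have hquad : Tendsto (fun z => z * (a * z + (β - c)) + C) atTop atTop :=
    tendsto_atTop_add_const_right _ C <| tendsto_id.atTop_mul_atTop₀ <|
      tendsto_atTop_add_const_right _ _ (tendsto_id.const_mul_atTop ha)
  filter_upwards [hquad.eventually_ge_atTop 0] with z hz
  linarith [add_one_le_exp (a * z ^ 2 + β * z + C)]

theorem exists_exp_sq_add_le_of_exp_quadratic_le_deriv {f f' : ℝ → ℝ} {a β C b : ℝ}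
    (ha : 0 < a) (hf : ∀ z, b ≤ z → HasDerivAt f (f' z) z)
    (hf' : ∀ z, b ≤ z → exp (a * z ^ 2 + β * z + C) ≤ f' z) :
    ∃ K, ∀ᶠ z in atTop, exp (a / 2 * z ^ 2) + K ≤ f z := by
  obtain ⟨M, hM⟩ := eventually_atTop.1 (eventually_mul_le_exp_quadratic (half_pos ha) a β C)
  set N := max M b
  have hG : ∀ x, HasDerivAt (fun w => exp (a / 2 * w ^ 2)) (exp (a / 2 * x ^ 2) * (a * x)) x :=
    fun x => ((hasDerivAt_pow 2 x).const_mul (a / 2)).exp.congr_deriv (by ring)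
  have hG_le : ∀ x, N ≤ x → exp (a / 2 * x ^ 2) * (a * x) ≤ f' x := fun x hx =>
    calc exp (a / 2 * x ^ 2) * (a * x)
        ≤ exp (a / 2 * x ^ 2) * exp (a / 2 * x ^ 2 + β * x + C) :=
          mul_le_mul_of_nonneg_left (hM x (le_of_max_le_left hx)) (exp_pos _).le
      _ = exp (a * x ^ 2 + β * x + C) := by rw [← exp_add]; ring_nf
      _ ≤ f' x := hf' x (le_of_max_le_right hx)
  refine ⟨f N - exp (a / 2 * N ^ 2), ?_⟩
  filter_upwards [eventually_ge_atTop N] with z hz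
  have := sub_le_sub_of_hasDerivAt_le (fun x hx => hf x (le_of_max_le_right hx))
    (fun x _ => hG x) hG_le hz
  linarith

theorem not_integrableOn_Ici_of_tendsto_atTop {F : ℝ → ℝ} {a : ℝ}
    (hF : Tendsto F atTop atTop) : ¬ IntegrableOn F (Ici a) := by
  intro hint
  obtain ⟨N, hN⟩ := eventually_atTop.1 (hF.eventually_ge_atTop 1)
  have hone : IntegrableOn (fun _ => (1 : ℝ)) (Ici (max N a)) := by
    refine Integrable.mono' (hint.mono_set (Ici_subset_Ici.2 (le_max_right N a)))
      aestronglyMeasurable_const ?_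
    rw [ae_restrict_iff' measurableSet_Ici]
    exact ae_of_all _ fun z hz => by
      rw [norm_one]; exact hN z (le_of_max_le_left hz)
  simp at hone

theorem not_integrableOn_exp_neg_mul_sq_mul {f : ℝ → ℝ} {a K z₀ : ℝ} (ha : 0 < a)
    (hf : ∀ᶠ z in atTop, exp (a * z ^ 2) + K ≤ f z) :
    ¬ IntegrableOn (fun z => exp (-(a / 2) * z ^ 2) * f z) (Ici z₀) := by
  have hsq : Tendsto (fun z : ℝ => a / 2 * z ^ 2) atTop atTop :=
    (tendsto_pow_atTop two_ne_zero).const_mul_atTop (half_pos ha)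
  have hdecay : Tendsto (fun z : ℝ => K * exp (-(a / 2) * z ^ 2)) atTop (𝓝 0) := by
    simpa [neg_mul, exp_neg] using
      (tendsto_inv_atTop_zero.comp (tendsto_exp_atTop.comp hsq)).const_mul K
  refine not_integrableOn_Ici_of_tendsto_atTop <|
    tendsto_atTop_mono' _ ?_ ((tendsto_exp_atTop.comp hsq).atTop_add hdecay)
  filter_upwards [hf] with z hz
  calc exp (a / 2 * z ^ 2) + K * exp (-(a / 2) * z ^ 2)
      = exp (-(a / 2) * z ^ 2) * (exp (a * z ^ 2) + K) := by
        rw [mul_add, ← exp_add]; ring_nf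
    _ ≤ exp (-(a / 2) * z ^ 2) * f z := mul_le_mul_of_nonneg_left hz (exp_pos _).le

theorem stmt_12_general (c : EReal) (J : Set ℝ) (hJ : J = {z : ℝ | c < (z : EReal)})
    (f g : ℝ → ℝ)
    (hf : ContDiffOn ℝ 2 f J) (hf' : ∀ z ∈ J, 0 < deriv f z)
    (hg : ∀ z ∈ J, g z = deriv (fun w => Real.log (deriv f w)) z)
    (hgconv : ConvexOn ℝ J g)
    (z₀ : ℝ)
    (hint : ∀ A : ℝ, 0 < A →
      IntegrableOn (fun z => Real.exp (-A * z ^ 2) * f z) (Set.Ici z₀)) :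
    AntitoneOn g J := by
  have hJopen : IsOpen J := hJ ▸ isOpen_lt continuous_const continuous_coe_real_ereal
  have hdf : ContDiffOn ℝ 1 (deriv f) J := hf.deriv_of_isOpen hJopen (by norm_num)
  have hfderiv : ∀ z ∈ J, HasDerivAt f (deriv f z) z := fun z hz =>
    ((hf.differentiableOn (by norm_num)).differentiableAt (hJopen.mem_nhds hz)).hasDerivAt
  have hlogderiv : ∀ z ∈ J, HasDerivAt (fun w => log (deriv f w)) (g z) z := fun z hz =>
    hg z hz ▸ (((hdf.differentiableOn one_ne_zero).differentiableAt (hJopen.mem_nhds hz)).log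
      (hf' z hz).ne').hasDerivAt
  intro a ha b hb hab
  by_contra! hlt
  have hab' : a < b := hab.lt_of_ne (by rintro rfl; exact lt_irrefl _ hlt)
  have hup : ∀ z, b ≤ z → z ∈ J := fun z hz => by
    subst hJ; exact lt_of_lt_of_le hb (EReal.coe_le_coe_iff.2 hz)
  set s := (g b - g a) / (b - a)
  have hs : 0 < s := div_pos (sub_pos.2 hlt) (sub_pos.2 hab')
  obtain ⟨C, hC⟩ := exists_exp_quadratic_le_of_hasDerivAt_log (β := g a - s * a)
    (fun z hz => hf' z (hup z hz)) (fun z hz => hlogderiv z (hup z hz))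
    (fun z hz => by linarith [hgconv.add_slope_mul_sub_le ha hb (hup z hz) hab' hz])
  obtain ⟨K, hK⟩ := exists_exp_sq_add_le_of_exp_quadratic_le_deriv (half_pos hs)
    (fun z hz => hfderiv z (hup z hz)) hC
  exact not_integrableOn_exp_neg_mul_sq_mul (half_pos (half_pos hs)) hK (hint _ (by positivity))

/-- Step (3.22) in the proof of Theorem 1.2: let `f : J → (0,∞)` be `C²` on `J = (c,∞)`
with `f' > 0`, `f(z) → ∞` as `z → ∞`, and suppose `g := (log f')' = f''/f'` is convex
on `J`. If `∫_{z₀}^∞ e^{-Az²} f(z) dz < ∞` for every `A > 0` (some `z₀ ∈ J`), then `g` is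
non-increasing on `J`. -/
theorem stmt_12 (c : EReal) (J : Set ℝ) (hJ : J = {z : ℝ | c < (z : EReal)})
    (f g : ℝ → ℝ)
    (hfpos : ∀ z ∈ J, 0 < f z)
    (hf : ContDiffOn ℝ 2 f J) (hf' : ∀ z ∈ J, 0 < deriv f z)
    (htop : Filter.Tendsto f Filter.atTop Filter.atTop)
    (hg : ∀ z ∈ J, g z = deriv (fun w => Real.log (deriv f w)) z)
    (hgconv : ConvexOn ℝ J g)
    (z₀ : ℝ) (hz₀ : z₀ ∈ J)
    (hint : ∀ A : ℝ, 0 < A →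
      IntegrableOn (fun z => Real.exp (-A * z ^ 2) * f z) (Set.Ici z₀)) :
    AntitoneOn g J :=
  stmt_12_general c J hJ f g hf hf' hg hgconv z₀ hint
end

section
/- Let f : (c,∞) → (0,∞) be C² with f' > 0, lim_{z→c⁺} f(z) = 0, and suppose g := f''/f' is positive and non-increasing on (c, z*] for some z* with f''(z*) > 0. Then f(z*) f''(z*) ≤ (f'(z*))², i.e., f is log-concave at z*. -/
/-!
With `k := g z*`, the function `f' - k f` has derivative `(g - k) f' ≥ 0` on `(c, z*]`,
because `g` is non-increasing there, so it is non-decreasing. Near `c` it is bounded below by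
`-k f`, which tends to `0`; hence `f'(z*) - k f(z*) ≥ 0`, and multiplying by `f'(z*) > 0` gives
`f(z*) f''(z*) ≤ f'(z*)²`.
-/

open Filter Set Topology

theorem monotoneOn_sub_const_mul_of_const_mul_le {D : Set ℝ} (hD : Convex ℝ D)
    {f f' f'' : ℝ → ℝ} {k : ℝ} (hf : ∀ x ∈ D, HasDerivAt f (f' x) x)
    (hf' : ∀ x ∈ D, HasDerivAt f' (f'' x) x) (hk : ∀ x ∈ D, k * f' x ≤ f'' x) :
    MonotoneOn (fun x => f' x - k * f x) D := by
  have hderiv : ∀ x ∈ D, HasDerivAt (fun x => f' x - k * f x) (f'' x - k * f' x) x :=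
    fun x hx => (hf' x hx).sub ((hf x hx).const_mul k)
  refine monotoneOn_of_hasDerivWithinAt_nonneg hD
    (fun x hx => (hderiv x hx).continuousAt.continuousWithinAt)
    (fun x hx => (hderiv x (interior_subset hx)).hasDerivWithinAt) fun x hx => ?_
  linarith [hk x (interior_subset hx)]

theorem le_of_monotoneOn_of_tendsto {α β : Type*} [Preorder α] [TopologicalSpace β] [Preorder β]
    [ClosedIicTopology β] {L : Filter α} [L.NeBot] {u v : α → β} {D : Set α} {a : β} {b : α}
    (hu : MonotoneOn u D) (hb : b ∈ D) (hL : ∀ᶠ z in L, z ∈ D ∧ z ≤ b)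
    (hvu : ∀ z ∈ D, v z ≤ u z) (hv : Tendsto v L (𝓝 a)) : a ≤ u b :=
  le_of_tendsto hv <| hL.mono fun _ hz => (hvu _ hz.1).trans (hu hz.1 hb hz.2)

namespace EReal

theorem comap_coe_nhdsGT_neBot {c : EReal} {b : ℝ} (h : c < b) :
    (comap Real.toEReal (𝓝[>] c)).NeBot := by
  refine (nhdsGT_neBot_of_exists_gt ⟨_, h⟩).comap_of_range_mem
    (mem_of_superset (Ioo_mem_nhdsGT h) ?_)
  rintro x ⟨hcx, hxb⟩
  rw [range_coe]
  exact fun hx => hx.elim (fun hbot => (hbot ▸ hcx).not_ge bot_le)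
    fun htop => (htop ▸ hxb).not_ge le_top

theorem eventually_comap_coe_nhdsGT {c : EReal} {b : ℝ} (h : c < b) :
    ∀ᶠ z : ℝ in comap Real.toEReal (𝓝[>] c), c < z ∧ z ≤ b :=
  (show ∀ᶠ z : ℝ in comap Real.toEReal (𝓝[>] c), (z : EReal) ∈ Ioo c b from
    preimage_mem_comap (Ioo_mem_nhdsGT h)).mono fun _ hz =>
      ⟨hz.1, EReal.coe_le_coe_iff.mp hz.2.le⟩

end EReal

theorem stmt_13_general (c : EReal) (J : Set ℝ) (hJ : J = {z : ℝ | c < (z : EReal)})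
    (f g : ℝ → ℝ)
    (hf : ContDiffOn ℝ 2 f J) (hf' : ∀ z ∈ J, 0 < deriv f z)
    (hlim : Filter.Tendsto f (Filter.comap Real.toEReal (nhdsWithin c (Set.Ioi c)))
      (nhds 0))
    (hg : ∀ z ∈ J, g z = deriv (deriv f) z / deriv f z)
    (zs : ℝ) (hzs : zs ∈ J)
    (hganti : AntitoneOn g (J ∩ Set.Iic zs)) :
    f zs * deriv (deriv f) zs ≤ (deriv f zs) ^ 2 := by
  have hJo : IsOpen J := hJ ▸ isOpen_Ioi.preimage continuous_coe_real_ereal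
  have hD : Convex ℝ (J ∩ Iic zs) := hJ ▸ ((ordConnected_Ioi.preimage_mono
    fun _ _ => EReal.coe_le_coe_iff.mpr).inter ordConnected_Iic).convex
  have hf₁ : ∀ x ∈ J, HasDerivAt f (deriv f x) x := fun x hx =>
    ((hf.contDiffAt (hJo.mem_nhds hx)).differentiableAt (by norm_num)).hasDerivAt
  have hf₂ : ∀ x ∈ J, HasDerivAt (deriv f) (deriv (deriv f) x) x := fun x hx =>
    (((hf.deriv_of_isOpen hJo (m := 1) (by norm_num)).contDiffAt
      (hJo.mem_nhds hx)).differentiableAt (by norm_num)).hasDerivAt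
  have hmul : ∀ z ∈ J, deriv (deriv f) z = g z * deriv f z := fun z hz => by
    rw [hg z hz, div_mul_cancel₀ _ (hf' z hz).ne']
  have hmono := monotoneOn_sub_const_mul_of_const_mul_le hD (k := g zs)
    (fun x hx => hf₁ x hx.1) (fun x hx => hf₂ x hx.1) fun x hx => by
      rw [hmul x hx.1]
      exact mul_le_mul_of_nonneg_right (hganti hx ⟨hzs, self_mem_Iic⟩ hx.2) (hf' x hx.1).le
  have hczs : c < zs := by rwa [hJ] at hzs
  have := EReal.comap_coe_nhdsGT_neBot hczs
  have hnonneg := le_of_monotoneOn_of_tendsto hmono ⟨hzs, self_mem_Iic⟩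
    ((EReal.eventually_comap_coe_nhdsGT hczs).mono fun _ hz => ⟨⟨hJ ▸ hz.1, hz.2⟩, hz.2⟩)
    (fun z hz => by linarith [hf' z hz.1]) (hlim.const_mul (-g zs))
  rw [mul_zero] at hnonneg
  calc f zs * deriv (deriv f) zs = g zs * f zs * deriv f zs := by rw [hmul zs hzs]; ring
    _ ≤ deriv f zs * deriv f zs := mul_le_mul_of_nonneg_right (by linarith) (hf' zs hzs).le
    _ = deriv f zs ^ 2 := (sq _).symm

/-- Step (3.25) in the proof of Theorem 1.2: let `f : (c,∞) → (0,∞)` be `C²` with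
`f' > 0` and `f(z) → 0` as `z → c⁺`, and suppose `g := f''/f'` is positive and
non-increasing on `(c, z*]` where `f''(z*) > 0`. Then `f(z*) f''(z*) ≤ (f'(z*))²`,
i.e. `f` is log-concave at `z*`. -/
theorem stmt_13 (c : EReal) (J : Set ℝ) (hJ : J = {z : ℝ | c < (z : EReal)})
    (f g : ℝ → ℝ)
    (hfpos : ∀ z ∈ J, 0 < f z)
    (hf : ContDiffOn ℝ 2 f J) (hf' : ∀ z ∈ J, 0 < deriv f z)
    (hlim : Filter.Tendsto f (Filter.comap Real.toEReal (nhdsWithin c (Set.Ioi c)))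
      (nhds 0))
    (hg : ∀ z ∈ J, g z = deriv (deriv f) z / deriv f z)
    (zs : ℝ) (hzs : zs ∈ J) (hf'' : 0 < deriv (deriv f) zs)
    (hgpos : ∀ z ∈ J ∩ Set.Iic zs, 0 < g z)
    (hganti : AntitoneOn g (J ∩ Set.Iic zs)) :
    f zs * deriv (deriv f) zs ≤ (deriv f zs) ^ 2 :=
  stmt_13_general c J hJ f g hf hf' hlim hg zs hzs hganti
end

section
/- Let g : ℝ → [0,∞) be convex, non-increasing, and nonnegative on all of ℝ, and let f : ℝ → ℝ be C² with f' > 0, (log f')' = g, and lim_{z→-∞} f(z) = -∞. Then g is identically 0, and consequently f is affine: f(z) = f(z') + f'(z')(z - z') for all z, z' ∈ ℝ. -/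
/-!
Suppose `g z₀ = c > 0`. Since `g` is non-increasing, `(log f')' ≥ c` on `(-∞, z₀]`, so
`f'(z) ≤ f'(z₀) e^{c (z - z₀)}` there, and integrating gives `f(z) ≥ f(z₀) - f'(z₀)/c` for all
`z ≤ z₀`, contradicting `f → -∞`. Hence `g ≡ 0`, so `f'` is constant and `f` is affine.
-/

open Real Set Filter

lemma le_mul_exp_of_le_deriv_log {φ : ℝ → ℝ} {b c : ℝ} (hφ : ∀ x, 0 < φ x)
    (hd : Differentiable ℝ fun x => log (φ x))
    (hc : ∀ x < b, c ≤ deriv (fun x => log (φ x)) x) {x : ℝ} (hx : x ≤ b) :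
    φ x ≤ φ b * exp (c * (x - b)) := by
  have hlog : c * (b - x) ≤ log (φ b) - log (φ x) :=
    (convex_Iic b).mul_sub_le_image_sub_of_le_deriv hd.continuous.continuousOn
      hd.differentiableOn (fun y hy => hc y (by simpa using hy)) x hx b (mem_Iic.2 le_rfl) hx
  calc φ x = exp (log (φ x)) := (exp_log (hφ x)).symm
    _ ≤ exp (log (φ b) + c * (x - b)) := exp_le_exp.mpr (by linarith)
    _ = φ b * exp (c * (x - b)) := by rw [exp_add, exp_log (hφ b)]

lemma sub_div_le_of_deriv_le_mul_exp {f : ℝ → ℝ} {A b c : ℝ} (hf : Differentiable ℝ f)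
    (hA : 0 ≤ A) (hc : 0 < c) (hbound : ∀ x < b, deriv f x ≤ A * exp (c * (x - b)))
    {x : ℝ} (hx : x ≤ b) : f b - A / c ≤ f x := by
  set G : ℝ → ℝ := fun y => A / c * exp (c * (y - b)) - f y
  have hG : ∀ y, HasDerivAt G (A * exp (c * (y - b)) - deriv f y) y := fun y => by
    have hlin : HasDerivAt (fun y => c * (y - b)) c y := by
      simpa using ((hasDerivAt_id y).sub_const b).const_mul c
    exact ((hlin.exp.const_mul (A / c)).sub (hf y).hasDerivAt).congr_deriv (by field_simp)
  have hGmono : MonotoneOn G (Iic b) :=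
    monotoneOn_of_deriv_nonneg (convex_Iic b)
      (fun y _ => (hG y).continuousAt.continuousWithinAt)
      (fun y _ => (hG y).differentiableAt.differentiableWithinAt)
      (fun y hy => by rw [(hG y).deriv]; linarith [hbound y (by simpa using hy)])
  have hGxb : G x ≤ G b := hGmono hx (mem_Iic.2 le_rfl) hx
  have : 0 ≤ A / c * exp (c * (x - b)) := by positivity
  simp only [G, sub_self, mul_zero, exp_zero, mul_one] at hGxb
  linarith

lemma deriv_log_deriv_nonpos_of_tendsto_atBot {f : ℝ → ℝ} (hf : Differentiable ℝ f)
    (hf' : ∀ x, 0 < deriv f x) (hd : Differentiable ℝ fun x => log (deriv f x))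
    (hanti : Antitone (deriv fun x => log (deriv f x)))
    (hbot : Tendsto f atBot atBot) (z : ℝ) :
    deriv (fun x => log (deriv f x)) z ≤ 0 := by
  by_contra! hc
  set c := deriv (fun x => log (deriv f x)) z
  have hbound : ∀ x < z, deriv f x ≤ deriv f z * exp (c * (x - z)) := fun x hx =>
    le_mul_exp_of_le_deriv_log hf' hd (fun y hy => hanti hy.le) hx.le
  obtain ⟨x, hfx, hxz⟩ :=
    ((hbot.eventually (eventually_lt_atBot (f z - deriv f z / c))).and
      (eventually_le_atBot z)).exists
  exact hfx.not_ge (sub_div_le_of_deriv_le_mul_exp hf (hf' z).le hc hbound hxz)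

lemma eq_add_mul_sub_of_deriv_eq {f : ℝ → ℝ} (hf : Differentiable ℝ f)
    (hconst : ∀ x y, deriv f x = deriv f y) (z z' : ℝ) :
    f z = f z' + deriv f z' * (z - z') := by
  have hd : ∀ x, HasDerivAt (fun x => f x - deriv f z' * x) (deriv f x - deriv f z' * 1) x :=
    fun x => (hf x).hasDerivAt.sub ((hasDerivAt_id x).const_mul _)
  have h := is_const_of_deriv_eq_zero (fun x => (hd x).differentiableAt)
    (fun x => by rw [(hd x).deriv, hconst x z']; ring) z z'
  linarith

theorem stmt_14_general (g f : ℝ → ℝ)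
    (hganti : Antitone g) (hg0 : ∀ z, 0 ≤ g z)
    (hf : ContDiff ℝ 2 f) (hf' : ∀ z, 0 < deriv f z)
    (hlog : ∀ z, deriv (fun w => Real.log (deriv f w)) z = g z)
    (hbot : Filter.Tendsto f Filter.atBot Filter.atBot) :
    (∀ z, g z = 0) ∧ ∀ z z' : ℝ, f z = f z' + deriv f z' * (z - z') := by
  have hfd : Differentiable ℝ f := hf.differentiable (by norm_num)
  have hlogd : Differentiable ℝ fun w => log (deriv f w) :=
    fun z => (hf.differentiable_deriv_two z).log (hf' z).ne'
  have hderiv : deriv (fun w => log (deriv f w)) = g := funext hlog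
  have hg : ∀ z, g z = 0 := fun z =>
    le_antisymm (hderiv ▸ deriv_log_deriv_nonpos_of_tendsto_atBot hfd hf' hlogd
      (hderiv ▸ hganti) hbot z) (hg0 z)
  have hconst : ∀ z z', deriv f z = deriv f z' := fun z z' =>
    log_injOn_pos (hf' z) (hf' z')
      (is_const_of_deriv_eq_zero hlogd (fun w => (hlog w).trans (hg w)) z z')
  exact ⟨hg, eq_add_mul_sub_of_deriv_eq hfd hconst⟩

/-- Key step of Theorem 4.2: let `g : ℝ → [0,∞)` be convex, non-increasing, and
nonnegative on all of `ℝ`, and `f : ℝ → ℝ` be `C²` with `f' > 0`, `(log f')' = g`,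
and `f(z) → -∞` as `z → -∞`. Then `g ≡ 0` and `f` is affine:
`f(z) = f(z') + f'(z')(z - z')` for all `z, z'`. -/
theorem stmt_14 (g f : ℝ → ℝ)
    (hgconv : ConvexOn ℝ Set.univ g) (hganti : Antitone g) (hg0 : ∀ z, 0 ≤ g z)
    (hf : ContDiff ℝ 2 f) (hf' : ∀ z, 0 < deriv f z)
    (hlog : ∀ z, deriv (fun w => Real.log (deriv f w)) z = g z)
    (hbot : Filter.Tendsto f Filter.atBot Filter.atBot) :
    (∀ z, g z = 0) ∧ ∀ z z' : ℝ, f z = f z' + deriv f z' * (z - z') :=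
  stmt_14_general g f hganti hg0 hf hf' hlog hbot
end
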